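/- arXiv:1809.08720 — 9 statements merged into one kernel-verified Lean document; each statement's English description precedes it below -/
import Mathlib

section
/- Let ω ∈ ℝⁿ with 1_nᵀω = 0 and set η = BᵀL†ω. For every x ∈ ℝⁿ, the node balance equation ω = B𝒜 sin(Bᵀx) holds if and only if the flow balance equation η = P_cut sin(Bᵀx) holds. (In particular, B𝒜 P_cut = B𝒜.) -/
/-!
Write `L = B𝒜Bᵀ` and `Q = 1 - LL†`. From `LL†L = L` we get `Q L Qᵀ = 0`, i.e.
`(QB) 𝒜 (QB)ᵀ = 0`, and positivity of the weights forces `QB = 0`: `LL†B = B`, which is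
`B𝒜 P_cut = B𝒜`. Since `LL†` is symmetric, `BᵀQ = 0` as well, so every column, hence every
row, of `Q` is constant by connectivity; thus `Qω = 0` whenever `1ᵀω = 0`, i.e. `LL†ω = ω`.
Applying `B𝒜` to the flow balance equation then recovers the node balance equation.
-/

open Matrix

theorem Matrix.eq_zero_of_mul_diagonal_mul_transpose_eq_zero {ι κ : Type*} [Fintype κ]
    [DecidableEq κ] {D : Matrix ι κ ℝ} {a : κ → ℝ} (ha : ∀ e, 0 < a e)
    (h : D * diagonal a * Dᵀ = 0) : D = 0 := by
  ext i e
  have hsum : ∑ f, a f * D i f ^ 2 = 0 := by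
    have hii : (D * diagonal a * Dᵀ) i i = 0 := by rw [h]; rfl
    rw [← hii, mul_apply]
    refine Finset.sum_congr rfl fun f _ => ?_
    rw [mul_diagonal, transpose_apply]
    ring
  have hterm := (Finset.sum_eq_zero_iff_of_nonneg fun f _ =>
    mul_nonneg (ha f).le (sq_nonneg (D i f))).mp hsum e (Finset.mem_univ e)
  simpa [(ha e).ne'] using hterm

theorem Matrix.mul_mul_eq_self_of_mul_diagonal_mul_transpose {ι κ : Type*} [Fintype ι]
    [DecidableEq ι] [Fintype κ] [DecidableEq κ] {B : Matrix ι κ ℝ} {a : κ → ℝ} (ha : ∀ e, 0 < a e)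
    {M : Matrix ι ι ℝ}
    (hM : B * diagonal a * Bᵀ * M * (B * diagonal a * Bᵀ) = B * diagonal a * Bᵀ) :
    B * diagonal a * Bᵀ * M * B = B := by
  set L := B * diagonal a * Bᵀ
  have hQL : (1 - L * M) * L = 0 := by rw [sub_mul, one_mul, hM, sub_self]
  have hQB : (1 - L * M) * B = 0 := by
    refine eq_zero_of_mul_diagonal_mul_transpose_eq_zero ha ?_
    calc (1 - L * M) * B * diagonal a * ((1 - L * M) * B)ᵀ
        = (1 - L * M) * L * (1 - L * M)ᵀ := by simp only [L, transpose_mul, Matrix.mul_assoc]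
      _ = 0 := by rw [hQL, Matrix.zero_mul]
  rw [Matrix.sub_mul, Matrix.one_mul, sub_eq_zero] at hQB
  exact hQB.symm

theorem Matrix.mulVec_eq_zero_of_sum_eq_zero {ι κ : Type*} [Fintype ι] {Q : Matrix κ ι ℝ}
    (hQ : ∀ i, ∃ c : ℝ, Q i = fun _ => c) {ω : ι → ℝ} (hω : ∑ j, ω j = 0) :
    Q *ᵥ ω = 0 := by
  ext i
  obtain ⟨c, hc⟩ := hQ i
  simp [mulVec, dotProduct, hc, ← Finset.mul_sum, hω]

theorem Matrix.mulVec_eq_self_of_transpose_mul_eq {ι κ : Type*} [Fintype ι] [DecidableEq ι]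
    [Fintype κ] {B : Matrix ι κ ℝ}
    (hker : ∀ x : ι → ℝ, Bᵀ *ᵥ x = 0 ↔ ∃ c : ℝ, x = fun _ => c)
    {P : Matrix ι ι ℝ} (hP : Pᵀ = P) (hBP : Bᵀ * P = Bᵀ) {ω : ι → ℝ} (hω : ∑ j, ω j = 0) :
    P *ᵥ ω = ω := by
  set Q := 1 - P
  have hBQ : Bᵀ * Q = 0 := by rw [Matrix.mul_sub, Matrix.mul_one, hBP, sub_self]
  have hrow : ∀ i, ∃ c : ℝ, Q i = fun _ => c := by
    intro i
    refine (hker _).mp ?_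
    have hQsymm : Qᵀ = Q := by rw [transpose_sub, transpose_one, hP]
    have hrow_eq : Q i = Q *ᵥ Pi.single i 1 := by
      ext j
      rw [mulVec_single_one, col_apply]
      exact congrFun (congrFun hQsymm j) i
    rw [hrow_eq, mulVec_mulVec, hBQ, zero_mulVec]
  have hQω := mulVec_eq_zero_of_sum_eq_zero hrow hω
  rwa [sub_mulVec, one_mulVec, sub_eq_zero, eq_comm] at hQω

theorem node_balance_iff_flow_balance_general
    {n m : ℕ}
    (B : Matrix (Fin n) (Fin m) ℝ)
    -- connectivity: the kernel of `Bᵀ` is spanned by the all-ones vector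
    (hconn : ∀ x : Fin n → ℝ, B.transpose.mulVec x = 0 ↔ ∃ c : ℝ, x = fun _ => c)
    -- positive edge weights
    (a : Fin m → ℝ) (ha : ∀ e, 0 < a e)
    (M : Matrix (Fin n) (Fin n) ℝ)
    -- Moore–Penrose conditions for `M = L†`, `L = B𝒜Bᵀ`
    (hM1 : (B * Matrix.diagonal a * B.transpose) * M * (B * Matrix.diagonal a * B.transpose)
        = B * Matrix.diagonal a * B.transpose)
    (hM4 : ((B * Matrix.diagonal a * B.transpose) * M)ᵀ = (B * Matrix.diagonal a * B.transpose) * M)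
    (ω : Fin n → ℝ) (hω : ∑ i, ω i = 0)
    (x : Fin n → ℝ) :
    let η : Fin m → ℝ := B.transpose.mulVec (M.mulVec ω)
    let Pcut : Matrix (Fin m) (Fin m) ℝ := B.transpose * M * (B * Matrix.diagonal a)
    ((ω = (B * Matrix.diagonal a).mulVec (fun e => Real.sin (B.transpose.mulVec x e))) ↔
      η = Pcut.mulVec (fun e => Real.sin (B.transpose.mulVec x e))) ∧
    B * Matrix.diagonal a * Pcut = B * Matrix.diagonal a := by
  intro η Pcut
  set L := B * diagonal a * Bᵀ
  have hLMB : L * M * B = B := mul_mul_eq_self_of_mul_diagonal_mul_transpose ha hM1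
  have hPcut : B * diagonal a * Pcut = B * diagonal a := by
    calc B * diagonal a * Pcut = L * M * B * diagonal a := by
          simp only [Pcut, L, Matrix.mul_assoc]
      _ = B * diagonal a := by rw [hLMB]
  have hBLM : Bᵀ * (L * M) = Bᵀ := by
    rw [← hM4, ← transpose_mul, hLMB]
  have hLMω : (L * M) *ᵥ ω = ω := mulVec_eq_self_of_transpose_mul_eq hconn hM4 hBLM hω
  have hBη : (B * diagonal a) *ᵥ η = ω := by
    calc (B * diagonal a) *ᵥ η = (L * M) *ᵥ ω := by
          simp only [η, L, mulVec_mulVec, Matrix.mul_assoc]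
      _ = ω := hLMω
  refine ⟨⟨fun h => ?_, fun h => ?_⟩, hPcut⟩
  · simp only [η, Pcut, h, mulVec_mulVec]
  · rw [← hBη, h, mulVec_mulVec, hPcut]

/-- Let `ω ⊥ 1ₙ` and `η = BᵀL†ω`. For every `x ∈ ℝⁿ`, the node
balance equation `ω = B𝒜 sin(Bᵀx)` holds iff the flow balance equation
`η = P_cut sin(Bᵀx)` holds. In particular `B𝒜 P_cut = B𝒜`. -/
theorem node_balance_iff_flow_balance
    {n m : ℕ} (hn : 2 ≤ n)
    (B : Matrix (Fin n) (Fin m) ℝ)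
    -- incidence matrix: each column has exactly one `+1`, one `-1`, zeros elsewhere
    (hB : ∀ e : Fin m, ∃ i j : Fin n, i ≠ j ∧ B i e = 1 ∧ B j e = -1 ∧
      ∀ k : Fin n, k ≠ i → k ≠ j → B k e = 0)
    -- connectivity: the kernel of `Bᵀ` is spanned by the all-ones vector
    (hconn : ∀ x : Fin n → ℝ, B.transpose.mulVec x = 0 ↔ ∃ c : ℝ, x = fun _ => c)
    -- positive edge weights
    (a : Fin m → ℝ) (ha : ∀ e, 0 < a e)
    (M : Matrix (Fin n) (Fin n) ℝ)
    -- Moore–Penrose conditions for `M = L†`, `L = B𝒜Bᵀ`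
    (hM1 : (B * Matrix.diagonal a * B.transpose) * M * (B * Matrix.diagonal a * B.transpose)
        = B * Matrix.diagonal a * B.transpose)
    (hM2 : M * (B * Matrix.diagonal a * B.transpose) * M = M)
    (hM3 : (M * (B * Matrix.diagonal a * B.transpose))ᵀ = M * (B * Matrix.diagonal a * B.transpose))
    (hM4 : ((B * Matrix.diagonal a * B.transpose) * M)ᵀ = (B * Matrix.diagonal a * B.transpose) * M)
    (ω : Fin n → ℝ) (hω : ∑ i, ω i = 0)
    (x : Fin n → ℝ) :
    let η : Fin m → ℝ := B.transpose.mulVec (M.mulVec ω)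
    let Pcut : Matrix (Fin m) (Fin m) ℝ := B.transpose * M * (B * Matrix.diagonal a)
    ((ω = (B * Matrix.diagonal a).mulVec (fun e => Real.sin (B.transpose.mulVec x e))) ↔
      η = Pcut.mulVec (fun e => Real.sin (B.transpose.mulVec x e))) ∧
    B * Matrix.diagonal a * Pcut = B * Matrix.diagonal a :=
  node_balance_iff_flow_balance_general B hconn a ha M hM1 hM4 ω hω x
end

section
/- Let ω ∈ ℝⁿ with 1_nᵀω = 0, η = BᵀL†ω, and γ ∈ [0, π/2). Suppose z* is the unique element of Im(Bᵀ) with ‖z*‖∞ ≤ γ satisfying the flow balance equation η = P_cut sin(z*). Then ψ* = sin(z*) satisfies ‖ψ*‖∞ ≤ sin(γ), and ψ* is the unique ψ ∈ ℝ^m with ‖ψ‖∞ ≤ sin(γ) satisfying the constrained edge balance equations η = P_cut ψ and arcsin(ψ) ∈ Im(Bᵀ). -/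
/-!
Since `γ < π / 2`, the sine is an increasing bijection from `[-γ, γ]` onto `[-sin γ, sin γ]`
with inverse `arcsin`. Applied entrywise, it maps the sup-norm ball of radius `γ` bijectively
onto that of radius `sin γ`, and `z ↦ sin z`, `ψ ↦ arcsin ψ` carry solutions of the flow
balance equation in `Im(Bᵀ)` to solutions of the constrained edge balance equations and back.
-/

open Matrix Real

lemma abs_sin_le_sin_of_abs_le {x γ : ℝ} (hγ : γ ≤ π / 2) (hx : |x| ≤ γ) :
    |sin x| ≤ sin γ := by
  rw [abs_sin_eq_sin_abs_of_abs_le_pi (hx.trans (hγ.trans (by linarith [pi_pos])))]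
  exact sin_le_sin_of_le_of_le_pi_div_two (by linarith [abs_nonneg x, pi_pos]) hγ hx

lemma abs_arcsin_le_iff_abs_le_sin {y γ : ℝ} (hγ : |γ| < π / 2) :
    |arcsin y| ≤ γ ↔ |y| ≤ sin γ := by
  rw [abs_lt] at hγ
  rw [abs_le, abs_le, le_arcsin_iff_sin_le' ⟨by linarith, by linarith⟩, sin_neg,
    arcsin_le_iff_le_sin' ⟨by linarith, hγ.2⟩]

section Entrywise

variable {ι : Type*} [Fintype ι]

lemma norm_sin_comp_le {z : ι → ℝ} {γ : ℝ} (hγ : γ ≤ π / 2) (hz : ‖z‖ ≤ γ) :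
    ‖fun i => sin (z i)‖ ≤ sin γ := by
  have hsinγ : 0 ≤ sin γ :=
    sin_nonneg_of_nonneg_of_le_pi ((norm_nonneg z).trans hz) (by linarith [pi_pos])
  refine (pi_norm_le_iff_of_nonneg hsinγ).2 fun i => ?_
  exact abs_sin_le_sin_of_abs_le hγ ((norm_le_pi_norm z i).trans hz)

lemma norm_arcsin_comp_le {ψ : ι → ℝ} {γ : ℝ} (hγ : γ ∈ Set.Ico 0 (π / 2))
    (hψ : ‖ψ‖ ≤ sin γ) : ‖fun i => arcsin (ψ i)‖ ≤ γ := by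
  refine (pi_norm_le_iff_of_nonneg hγ.1).2 fun i => ?_
  exact (abs_arcsin_le_iff_abs_le_sin ((abs_of_nonneg hγ.1).trans_lt hγ.2)).2
    ((norm_le_pi_norm ψ i).trans hψ)

lemma arcsin_comp_sin_of_norm_le {z : ι → ℝ} (hz : ‖z‖ ≤ π / 2) :
    (fun i => arcsin (sin (z i))) = z := by
  funext i
  exact arcsin_sin' (abs_le.1 ((norm_le_pi_norm z i).trans hz))

lemma sin_comp_arcsin_of_norm_le_one {ψ : ι → ℝ} (hψ : ‖ψ‖ ≤ 1) :
    (fun i => sin (arcsin (ψ i))) = ψ := by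
  funext i
  exact sin_arcsin' (abs_le.1 ((norm_le_pi_norm ψ i).trans hψ))

end Entrywise

theorem flow_balance_to_constrained_edge_balance_general
    {n m : ℕ}
    (B : Matrix (Fin n) (Fin m) ℝ)
    (a : Fin m → ℝ)
    (M : Matrix (Fin n) (Fin n) ℝ)
    (ω : Fin n → ℝ)
    (γ : ℝ) (hγ : γ ∈ Set.Ico 0 (Real.pi / 2))
    (zstar : Fin m → ℝ)
    -- `z*` is a flow vector with `‖z*‖∞ ≤ γ` solving the flow balance equation
    (hz1 : ∃ x : Fin n → ℝ, zstar = B.transpose.mulVec x)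
    (hz2 : ‖zstar‖ ≤ γ)
    (hz3 : B.transpose.mulVec (M.mulVec ω) =
      (B.transpose * M * (B * Matrix.diagonal a)).mulVec (fun e => Real.sin (zstar e)))
    -- and it is unique with this property
    (hz4 : ∀ z : Fin m → ℝ, (∃ x : Fin n → ℝ, z = B.transpose.mulVec x) → ‖z‖ ≤ γ →
      B.transpose.mulVec (M.mulVec ω) =
        (B.transpose * M * (B * Matrix.diagonal a)).mulVec (fun e => Real.sin (z e)) →
      z = zstar) :
    let η : Fin m → ℝ := B.transpose.mulVec (M.mulVec ω)
    let Pcut : Matrix (Fin m) (Fin m) ℝ := B.transpose * M * (B * Matrix.diagonal a)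
    let ψstar : Fin m → ℝ := fun e => Real.sin (zstar e)
    ‖ψstar‖ ≤ Real.sin γ ∧
    η = Pcut.mulVec ψstar ∧
    (∃ x : Fin n → ℝ, (fun e => Real.arcsin (ψstar e)) = B.transpose.mulVec x) ∧
    (∀ ψ : Fin m → ℝ, ‖ψ‖ ≤ Real.sin γ → η = Pcut.mulVec ψ →
      (∃ x : Fin n → ℝ, (fun e => Real.arcsin (ψ e)) = B.transpose.mulVec x) →
      ψ = ψstar) := by
  intro η Pcut ψstar
  have arcsin_ψstar : (fun e => arcsin (ψstar e)) = zstar :=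
    arcsin_comp_sin_of_norm_le (hz2.trans hγ.2.le)
  refine ⟨norm_sin_comp_le hγ.2.le hz2, hz3, hz1.imp fun x hx => arcsin_ψstar.trans hx,
    fun ψ hψ hηψ hψim => ?_⟩
  have sin_arcsin_ψ : (fun e => sin (arcsin (ψ e))) = ψ :=
    sin_comp_arcsin_of_norm_le_one (hψ.trans (sin_le_one γ))
  rw [← sin_arcsin_ψ] at hηψ
  have arcsin_ψ : (fun e => arcsin (ψ e)) = zstar :=
    hz4 _ hψim (norm_arcsin_comp_le hγ hψ) hηψ
  funext e
  rw [← congrFun sin_arcsin_ψ e]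
  exact congrArg sin (congrFun arcsin_ψ e)

/-- Let `ω ⊥ 1ₙ`, `η = BᵀL†ω`, `γ ∈ [0, π/2)`. If `z*` is the
unique element of `Im(Bᵀ)` with `‖z*‖∞ ≤ γ` satisfying the flow balance equation
`η = P_cut sin(z*)`, then `ψ* = sin(z*)` satisfies `‖ψ*‖∞ ≤ sin γ` and is the unique
`ψ` with `‖ψ‖∞ ≤ sin γ` satisfying the constrained edge balance equations
`η = P_cut ψ` and `arcsin(ψ) ∈ Im(Bᵀ)`. -/
theorem flow_balance_to_constrained_edge_balance
    {n m : ℕ} (hn : 2 ≤ n)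
    (B : Matrix (Fin n) (Fin m) ℝ)
    (hB : ∀ e : Fin m, ∃ i j : Fin n, i ≠ j ∧ B i e = 1 ∧ B j e = -1 ∧
      ∀ k : Fin n, k ≠ i → k ≠ j → B k e = 0)
    (hconn : ∀ x : Fin n → ℝ, B.transpose.mulVec x = 0 ↔ ∃ c : ℝ, x = fun _ => c)
    (a : Fin m → ℝ) (ha : ∀ e, 0 < a e)
    (M : Matrix (Fin n) (Fin n) ℝ)
    (hM1 : (B * Matrix.diagonal a * B.transpose) * M * (B * Matrix.diagonal a * B.transpose)
        = B * Matrix.diagonal a * B.transpose)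
    (hM2 : M * (B * Matrix.diagonal a * B.transpose) * M = M)
    (hM3 : (M * (B * Matrix.diagonal a * B.transpose))ᵀ = M * (B * Matrix.diagonal a * B.transpose))
    (hM4 : ((B * Matrix.diagonal a * B.transpose) * M)ᵀ = (B * Matrix.diagonal a * B.transpose) * M)
    (ω : Fin n → ℝ) (hω : ∑ i, ω i = 0)
    (γ : ℝ) (hγ : γ ∈ Set.Ico 0 (Real.pi / 2))
    (zstar : Fin m → ℝ)
    -- `z*` is a flow vector with `‖z*‖∞ ≤ γ` solving the flow balance equation
    (hz1 : ∃ x : Fin n → ℝ, zstar = B.transpose.mulVec x)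
    (hz2 : ‖zstar‖ ≤ γ)
    (hz3 : B.transpose.mulVec (M.mulVec ω) =
      (B.transpose * M * (B * Matrix.diagonal a)).mulVec (fun e => Real.sin (zstar e)))
    -- and it is unique with this property
    (hz4 : ∀ z : Fin m → ℝ, (∃ x : Fin n → ℝ, z = B.transpose.mulVec x) → ‖z‖ ≤ γ →
      B.transpose.mulVec (M.mulVec ω) =
        (B.transpose * M * (B * Matrix.diagonal a)).mulVec (fun e => Real.sin (z e)) →
      z = zstar) :
    let η : Fin m → ℝ := B.transpose.mulVec (M.mulVec ω)
    let Pcut : Matrix (Fin m) (Fin m) ℝ := B.transpose * M * (B * Matrix.diagonal a)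
    let ψstar : Fin m → ℝ := fun e => Real.sin (zstar e)
    ‖ψstar‖ ≤ Real.sin γ ∧
    η = Pcut.mulVec ψstar ∧
    (∃ x : Fin n → ℝ, (fun e => Real.arcsin (ψstar e)) = B.transpose.mulVec x) ∧
    (∀ ψ : Fin m → ℝ, ‖ψ‖ ≤ Real.sin γ → η = Pcut.mulVec ψ →
      (∃ x : Fin n → ℝ, (fun e => Real.arcsin (ψ e)) = B.transpose.mulVec x) →
      ψ = ψstar) :=
  flow_balance_to_constrained_edge_balance_general B a M ω γ hγ zstar hz1 hz2 hz3 hz4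
end

section
/- Let ω ∈ ℝⁿ with 1_nᵀω = 0 and γ ∈ [0, π/2). If φ* ∈ ℝ^m satisfies ‖φ*‖∞ ≤ sin(γ) and the unconstrained edge balance equation BᵀL†ω = P_cut φ* + P_cyc arcsin(φ*), then there exists x* ∈ ℝⁿ with 1_nᵀx* = 0 such that sin(Bᵀx*) = φ*, ‖Bᵀx*‖∞ ≤ γ, and ω = B𝒜 sin(Bᵀx*); i.e., x* is a synchronization manifold of the Kuramoto model in S^G(γ). -/
open Matrix

/-!
Since `Ker Bᵀ = span 1` and the weights are positive, `Ker L = span 1`; together with the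
Penrose identities `L L† L = L` and `(L L†)ᵀ = L L†` this makes `L L†` the identity on `1ᗮ`, which
contains `ω` and the range of `B`. Put `ψ = arcsin φ*`. Applying `B𝒜` to the edge balance equation
`BᵀL†ω = P_cut φ* + P_cyc ψ` and using `B𝒜Bᵀ = L` gives `ω = B𝒜φ*`, while the equation itself says
exactly that `x = L†ω + L†B𝒜(ψ - φ*)`, shifted to mean zero, has `Bᵀx = ψ`. Then `sin(Bᵀx) = φ*`
and `‖Bᵀx‖∞ ≤ arcsin(sin γ) = γ`.
-/

theorem const_eq_zero_of_sum_eq_zero {ι : Type*} [Fintype ι] {c : ℝ}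
    (h : ∑ _ : ι, c = 0) : (fun _ : ι => c) = 0 := by
  funext i
  have : Nonempty ι := ⟨i⟩
  have hcard : (Fintype.card ι : ℝ) ≠ 0 := Nat.cast_ne_zero.mpr Fintype.card_ne_zero
  simp only [Finset.sum_const, Finset.card_univ, nsmul_eq_mul] at h
  exact (mul_eq_zero.mp h).resolve_left hcard

namespace Matrix

variable {ι ε : Type*} [Fintype ι]

theorem exists_sum_eq_zero_transpose_mulVec_eq {B : Matrix ι ε ℝ}
    (hB : Bᵀ *ᵥ (fun _ => 1) = 0) (u : ι → ℝ) :
    ∃ x : ι → ℝ, ∑ i, x i = 0 ∧ Bᵀ *ᵥ x = Bᵀ *ᵥ u := by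
  set c : ℝ := (∑ i, u i) / Fintype.card ι
  refine ⟨u - c • fun _ => 1, ?_, ?_⟩
  · rcases isEmpty_or_nonempty ι with _ | _
    · exact Finset.sum_of_isEmpty _
    · have hcard : (Fintype.card ι : ℝ) ≠ 0 := Nat.cast_ne_zero.mpr Fintype.card_ne_zero
      simp only [Pi.sub_apply, Pi.smul_apply, smul_eq_mul, mul_one, Finset.sum_sub_distrib,
        Finset.sum_const, Finset.card_univ, nsmul_eq_mul, c]
      field_simp
      ring
  · rw [mulVec_sub, mulVec_smul, hB, smul_zero, sub_zero]

variable [Fintype ε]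

theorem sum_mulVec_eq_zero {B : Matrix ι ε ℝ} (hB : Bᵀ *ᵥ (fun _ => 1) = 0) (z : ε → ℝ) :
    ∑ i, (B *ᵥ z) i = 0 := by
  rw [← dotProduct_one, dotProduct_comm, dotProduct_mulVec, ← mulVec_transpose]
  exact hB ▸ zero_dotProduct z

theorem dotProduct_mulVec_weightedLaplacian [DecidableEq ε] (B : Matrix ι ε ℝ) (a : ε → ℝ)
    (v : ι → ℝ) : v ⬝ᵥ (B * diagonal a * Bᵀ) *ᵥ v = ∑ e, a e * (Bᵀ *ᵥ v) e ^ 2 := by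
  rw [← mulVec_mulVec, ← mulVec_mulVec, dotProduct_mulVec, ← mulVec_transpose]
  simp only [dotProduct, mulVec_diagonal]
  exact Finset.sum_congr rfl fun e _ => by ring

theorem transpose_mulVec_eq_zero_of_dotProduct_weightedLaplacian_eq_zero [DecidableEq ε]
    {B : Matrix ι ε ℝ} {a : ε → ℝ} (ha : ∀ e, 0 < a e) {v : ι → ℝ}
    (h : v ⬝ᵥ (B * diagonal a * Bᵀ) *ᵥ v = 0) : Bᵀ *ᵥ v = 0 := by
  rw [dotProduct_mulVec_weightedLaplacian] at h
  funext e
  have hterm := (Finset.sum_eq_zero_iff_of_nonneg fun e _ =>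
    mul_nonneg (ha e).le (sq_nonneg ((Bᵀ *ᵥ v) e))).mp h e (Finset.mem_univ e)
  exact pow_eq_zero_iff two_ne_zero |>.mp ((mul_eq_zero.mp hterm).resolve_left (ha e).ne')

theorem sub_mul_mulVec_dotProduct_mulVec_eq_zero {R : Type*} [CommRing R] {L M : Matrix ι ι R}
    (hLML : L * M * L = L) (hLM : (L * M)ᵀ = L * M) (w x : ι → R) :
    (w - (L * M) *ᵥ w) ⬝ᵥ L *ᵥ x = 0 := by
  rw [sub_dotProduct, dotProduct_comm ((L * M) *ᵥ w),
    ← dotProduct_transpose_mulVec (L * M) w (L *ᵥ x), hLM, mulVec_mulVec, hLML, sub_self]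

theorem weightedLaplacian_mul_mulVec_eq_self [DecidableEq ε] {B : Matrix ι ε ℝ}
    (hker : ∀ x : ι → ℝ, Bᵀ *ᵥ x = 0 ↔ ∃ c : ℝ, x = fun _ => c)
    {a : ε → ℝ} (ha : ∀ e, 0 < a e) {M : Matrix ι ι ℝ}
    (hLML : (B * diagonal a * Bᵀ) * M * (B * diagonal a * Bᵀ) = B * diagonal a * Bᵀ)
    (hLM : ((B * diagonal a * Bᵀ) * M)ᵀ = (B * diagonal a * Bᵀ) * M)
    {w : ι → ℝ} (hw : ∑ i, w i = 0) : ((B * diagonal a * Bᵀ) * M) *ᵥ w = w := by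
  set v := w - ((B * diagonal a * Bᵀ) * M) *ᵥ w with hv
  have hsum : ∑ i, v i = 0 := by
    have hrange : (B * diagonal a * Bᵀ * M) *ᵥ w = B *ᵥ ((diagonal a * Bᵀ * M) *ᵥ w) := by
      simp only [mulVec_mulVec, Matrix.mul_assoc]
    simp only [hv, Pi.sub_apply, Finset.sum_sub_distrib, hw, hrange,
      sum_mulVec_eq_zero ((hker _).2 ⟨1, rfl⟩), sub_self]
  obtain ⟨c, hc⟩ := (hker v).1 <| transpose_mulVec_eq_zero_of_dotProduct_weightedLaplacian_eq_zero
    ha (sub_mul_mulVec_dotProduct_mulVec_eq_zero hLML hLM w v)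
  have hv0 : v = 0 := hc ▸ const_eq_zero_of_sum_eq_zero (hc ▸ hsum)
  exact (sub_eq_zero.mp hv0).symm

variable [DecidableEq ε] {B : Matrix ι ε ℝ} {a : ε → ℝ} {M : Matrix ι ι ℝ} {ω : ι → ℝ}
  {φ ψ : ε → ℝ}

theorem transpose_mulVec_edgeBalance_potential
    (h : Bᵀ *ᵥ M *ᵥ ω = (Bᵀ * M * (B * diagonal a)) *ᵥ φ +
      (1 - Bᵀ * M * (B * diagonal a)) *ᵥ ψ) :
    Bᵀ *ᵥ (M *ᵥ ω + M *ᵥ (B * diagonal a) *ᵥ (ψ - φ)) = ψ := by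
  rw [mulVec_add, h, mulVec_mulVec, mulVec_mulVec, ← Matrix.mul_assoc, sub_mulVec, one_mulVec,
    mulVec_sub]
  abel

theorem eq_mulVec_of_edgeBalance
    (hker : ∀ x : ι → ℝ, Bᵀ *ᵥ x = 0 ↔ ∃ c : ℝ, x = fun _ => c) (ha : ∀ e, 0 < a e)
    (hLML : (B * diagonal a * Bᵀ) * M * (B * diagonal a * Bᵀ) = B * diagonal a * Bᵀ)
    (hLM : ((B * diagonal a * Bᵀ) * M)ᵀ = (B * diagonal a * Bᵀ) * M)
    (hω : ∑ i, ω i = 0)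
    (h : Bᵀ *ᵥ M *ᵥ ω = (Bᵀ * M * (B * diagonal a)) *ᵥ φ +
      (1 - Bᵀ * M * (B * diagonal a)) *ᵥ ψ) :
    ω = (B * diagonal a) *ᵥ φ := by
  have hfix {w : ι → ℝ} (hw : ∑ i, w i = 0) :=
    weightedLaplacian_mul_mulVec_eq_self hker ha hLML hLM hw
  have hrange (z : ε → ℝ) : ∑ i, ((B * diagonal a) *ᵥ z) i = 0 := by
    rw [← mulVec_mulVec]
    exact sum_mulVec_eq_zero ((hker _).2 ⟨1, rfl⟩) _
  have hC (z : ε → ℝ) : (B * diagonal a) *ᵥ (Bᵀ * M * (B * diagonal a)) *ᵥ z =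
      ((B * diagonal a * Bᵀ) * M) *ᵥ (B * diagonal a) *ᵥ z := by
    simp only [mulVec_mulVec, Matrix.mul_assoc]
  have hω' : ω = (B * diagonal a) *ᵥ Bᵀ *ᵥ M *ᵥ ω :=
    (hfix hω).symm.trans (by simp only [mulVec_mulVec, Matrix.mul_assoc])
  rw [hω', h, mulVec_add, sub_mulVec, one_mulVec, mulVec_sub, hC, hC, hfix (hrange φ),
    hfix (hrange ψ)]
  abel

end Matrix

theorem Real.norm_arcsin_le {ε : Type*} [Fintype ε] {γ : ℝ} (hγ : γ ∈ Set.Icc 0 (Real.pi / 2))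
    {φ : ε → ℝ} (hφ : ‖φ‖ ≤ Real.sin γ) : ‖fun e => Real.arcsin (φ e)‖ ≤ γ := by
  have hγs : Real.arcsin (Real.sin γ) = γ := Real.arcsin_sin (by linarith [Real.pi_pos, hγ.1]) hγ.2
  refine (pi_norm_le_iff_of_nonneg hγ.1).2 fun e => ?_
  have hφe := abs_le.mp ((Real.norm_eq_abs _ ▸ norm_le_pi_norm φ e).trans hφ)
  rw [Real.norm_eq_abs, abs_le]
  constructor
  · simpa only [Real.arcsin_neg, hγs] using Real.arcsin_le_arcsin hφe.1
  · simpa only [hγs] using Real.arcsin_le_arcsin hφe.2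

theorem unconstrained_edge_balance_to_sync_manifold_general
    {n m : ℕ}
    (B : Matrix (Fin n) (Fin m) ℝ)
    (hconn : ∀ x : Fin n → ℝ, B.transpose.mulVec x = 0 ↔ ∃ c : ℝ, x = fun _ => c)
    (a : Fin m → ℝ) (ha : ∀ e, 0 < a e)
    (M : Matrix (Fin n) (Fin n) ℝ)
    (hM1 : (B * Matrix.diagonal a * B.transpose) * M * (B * Matrix.diagonal a * B.transpose)
        = B * Matrix.diagonal a * B.transpose)
    (hM4 : ((B * Matrix.diagonal a * B.transpose) * M)ᵀ = (B * Matrix.diagonal a * B.transpose) * M)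
    (ω : Fin n → ℝ) (hω : ∑ i, ω i = 0)
    (γ : ℝ) (hγ : γ ∈ Set.Ico 0 (Real.pi / 2))
    (φstar : Fin m → ℝ)
    (hφ1 : ‖φstar‖ ≤ Real.sin γ)
    (hφ2 : B.transpose.mulVec (M.mulVec ω) =
      (B.transpose * M * (B * Matrix.diagonal a)).mulVec φstar +
      ((1 : Matrix (Fin m) (Fin m) ℝ) - B.transpose * M * (B * Matrix.diagonal a)).mulVec
        (fun e => Real.arcsin (φstar e))) :
    ∃ xstar : Fin n → ℝ,
      (∑ i, xstar i = 0) ∧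
      (fun e => Real.sin (B.transpose.mulVec xstar e)) = φstar ∧
      ‖B.transpose.mulVec xstar‖ ≤ γ ∧
      ω = (B * Matrix.diagonal a).mulVec (fun e => Real.sin (B.transpose.mulVec xstar e)) := by
  have hsin : (fun e => Real.sin (Real.arcsin (φstar e))) = φstar := funext fun e =>
    have hφe := abs_le.mp <| (Real.norm_eq_abs _ ▸ norm_le_pi_norm φstar e).trans
      (hφ1.trans (Real.sin_le_one γ))
    Real.sin_arcsin hφe.1 hφe.2
  obtain ⟨x, hx_sum, hx⟩ := exists_sum_eq_zero_transpose_mulVec_eq ((hconn _).2 ⟨1, rfl⟩)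
    (M *ᵥ ω + M *ᵥ (B * diagonal a) *ᵥ ((fun e => Real.arcsin (φstar e)) - φstar))
  rw [transpose_mulVec_edgeBalance_potential hφ2] at hx
  refine ⟨x, hx_sum, hx ▸ hsin, hx ▸ Real.norm_arcsin_le (Set.Ico_subset_Icc_self hγ) hφ1, ?_⟩
  rw [hx, hsin]
  exact eq_mulVec_of_edgeBalance hconn ha hM1 hM4 hω hφ2

/-- Let `ω ⊥ 1ₙ` and `γ ∈ [0, π/2)`. If `φ*` satisfies
`‖φ*‖∞ ≤ sin γ` and the unconstrained edge balance equation
`BᵀL†ω = P_cut φ* + P_cyc arcsin(φ*)`, then there exists `x* ⊥ 1ₙ` with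
`sin(Bᵀx*) = φ*`, `‖Bᵀx*‖∞ ≤ γ`, and `ω = B𝒜 sin(Bᵀx*)`; i.e. `x*` is a
synchronization manifold of the Kuramoto model in `S^G(γ)`. -/
theorem unconstrained_edge_balance_to_sync_manifold
    {n m : ℕ} (hn : 2 ≤ n)
    (B : Matrix (Fin n) (Fin m) ℝ)
    (hB : ∀ e : Fin m, ∃ i j : Fin n, i ≠ j ∧ B i e = 1 ∧ B j e = -1 ∧
      ∀ k : Fin n, k ≠ i → k ≠ j → B k e = 0)
    (hconn : ∀ x : Fin n → ℝ, B.transpose.mulVec x = 0 ↔ ∃ c : ℝ, x = fun _ => c)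
    (a : Fin m → ℝ) (ha : ∀ e, 0 < a e)
    (M : Matrix (Fin n) (Fin n) ℝ)
    (hM1 : (B * Matrix.diagonal a * B.transpose) * M * (B * Matrix.diagonal a * B.transpose)
        = B * Matrix.diagonal a * B.transpose)
    (hM2 : M * (B * Matrix.diagonal a * B.transpose) * M = M)
    (hM3 : (M * (B * Matrix.diagonal a * B.transpose))ᵀ = M * (B * Matrix.diagonal a * B.transpose))
    (hM4 : ((B * Matrix.diagonal a * B.transpose) * M)ᵀ = (B * Matrix.diagonal a * B.transpose) * M)
    (ω : Fin n → ℝ) (hω : ∑ i, ω i = 0)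
    (γ : ℝ) (hγ : γ ∈ Set.Ico 0 (Real.pi / 2))
    (φstar : Fin m → ℝ)
    (hφ1 : ‖φstar‖ ≤ Real.sin γ)
    (hφ2 : B.transpose.mulVec (M.mulVec ω) =
      (B.transpose * M * (B * Matrix.diagonal a)).mulVec φstar +
      ((1 : Matrix (Fin m) (Fin m) ℝ) - B.transpose * M * (B * Matrix.diagonal a)).mulVec
        (fun e => Real.arcsin (φstar e))) :
    ∃ xstar : Fin n → ℝ,
      (∑ i, xstar i = 0) ∧
      (fun e => Real.sin (B.transpose.mulVec xstar e)) = φstar ∧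
      ‖B.transpose.mulVec xstar‖ ≤ γ ∧
      ω = (B * Matrix.diagonal a).mulVec (fun e => Real.sin (B.transpose.mulVec xstar e)) :=
  unconstrained_edge_balance_to_sync_manifold_general B hconn a ha M hM1 hM4 ω hω γ hγ φstar hφ1 hφ2
end

section
/- The function h : [0,∞) → ℝ defined by h(x) = (x+1)·√(1 − (x/(x+1))²) − x·arccos(x/(x+1)) is continuous and strictly monotonically decreasing, satisfies h(0) = 1 and h(x) > 0 for all x ≥ 0, and h(x) → 0 as x → ∞. Consequently h is a bijection from [0,∞) onto (0,1] and admits an inverse h⁻¹ : (0,1] → [0,∞). -/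
/-!
Put `u = x / (x + 1) = cos θ`. The function `g u = √(1 - u²) - u · arccos u` has
derivative `-arccos u`, and `h x = (x + 1) · g u`; hence `h' x = sin θ - θ < 0`.
Positivity is `g u > 0`, i.e. `θ < tan θ`, and `x sin θ ≤ x θ` gives `h x ≤ sin θ → 0`.
Surjectivity onto `(0, 1]` is then the intermediate value theorem.
-/

open Filter Topology

/-- The scalar function `h(x) = (x+1)·√(1 − (x/(x+1))²) − x·arccos(x/(x+1))`. -/
noncomputable def hfun (x : ℝ) : ℝ :=
  (x + 1) * Real.sqrt (1 - (x / (x + 1)) ^ 2) - x * Real.arccos (x / (x + 1))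

open Real Set

lemma sqrt_one_sub_sq_le_arccos (u : ℝ) : √(1 - u ^ 2) ≤ arccos u := by
  simpa only [sin_arccos] using sin_le (arccos_nonneg u)

lemma sqrt_one_sub_sq_lt_arccos {u : ℝ} (hu : u < 1) : √(1 - u ^ 2) < arccos u := by
  simpa only [sin_arccos] using sin_lt (arccos_pos.2 hu)

lemma mul_arccos_lt_sqrt_one_sub_sq {u : ℝ} (hu : u < 1) : u * arccos u < √(1 - u ^ 2) := by
  rcases lt_trichotomy u 0 with hneg | rfl | hpos
  · exact (mul_neg_of_neg_of_pos hneg (arccos_pos.2 hu)).trans_le (sqrt_nonneg _)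
  · simp
  · -- `θ < tan θ` for `θ = arccos u`
    have h := lt_tan (arccos_pos.2 hu) (arccos_lt_pi_div_two.2 hpos)
    rw [tan_arccos, lt_div_iff₀ hpos] at h
    linarith

lemma hasDerivAt_sqrt_one_sub_sq_sub_mul_arccos {u : ℝ} (h₀ : -1 < u) (h₁ : u < 1) :
    HasDerivAt (fun v => √(1 - v ^ 2) - v * arccos v) (-arccos u) u := by
  have hpos : 0 < 1 - u ^ 2 := by nlinarith
  have hsqrt : √(1 - u ^ 2) ≠ 0 := (sqrt_pos.2 hpos).ne'
  have hs : HasDerivAt (fun v => √(1 - v ^ 2)) (-(2 * u) / (2 * √(1 - u ^ 2))) u := by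
    simpa using ((hasDerivAt_pow 2 u).const_sub 1).sqrt hpos.ne'
  have ha : HasDerivAt (fun v => v * arccos v) (1 * arccos u + u * -(1 / √(1 - u ^ 2))) u :=
    (hasDerivAt_id' u).mul (hasDerivAt_arccos h₀.ne' h₁.ne)
  refine (hs.fun_sub ha).congr_deriv ?_
  field_simp
  ring

lemma hfun_eq_mul {x : ℝ} (hx : x + 1 ≠ 0) :
    hfun x = (x + 1) * (√(1 - (x / (x + 1)) ^ 2) - x / (x + 1) * arccos (x / (x + 1))) := by
  rw [hfun]
  field_simp

lemma hasDerivAt_hfun {x : ℝ} (hx : -(1 / 2) < x) :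
    HasDerivAt hfun (√(1 - (x / (x + 1)) ^ 2) - arccos (x / (x + 1))) x := by
  have hx1 : 0 < x + 1 := by linarith
  have hu₀ : -1 < x / (x + 1) := by rw [lt_div_iff₀ hx1]; linarith
  have hu₁ : x / (x + 1) < 1 := by rw [div_lt_one hx1]; linarith
  have hu : HasDerivAt (fun y => y / (y + 1)) (1 / (x + 1) ^ 2) x := by
    refine ((hasDerivAt_id' x).div ((hasDerivAt_id' x).add_const 1) hx1.ne').congr_deriv ?_
    ring
  have h := ((hasDerivAt_id' x).add_const 1).fun_mul
    ((hasDerivAt_sqrt_one_sub_sq_sub_mul_arccos hu₀ hu₁).comp x hu)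
  refine (h.congr_of_eventuallyEq ?_).congr_deriv ?_
  · filter_upwards [eventually_gt_nhds (show -1 < x by linarith)] with y hy
    exact hfun_eq_mul (by linarith)
  · simp only [Function.comp_apply]
    generalize √(1 - (x / (x + 1)) ^ 2) = s
    generalize arccos (x / (x + 1)) = θ
    field_simp
    ring

lemma continuousOn_hfun : ContinuousOn hfun (Ioi (-1)) := by
  intro x hx
  have : x + 1 ≠ 0 := by linarith [mem_Ioi.1 hx]
  refine ContinuousAt.continuousWithinAt ?_
  unfold hfun
  fun_prop (disch := assumption)

lemma strictAntiOn_hfun : StrictAntiOn hfun (Ici (-(1 / 2))) := by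
  refine strictAntiOn_of_deriv_neg (convex_Ici _)
    (continuousOn_hfun.mono (Ici_subset_Ioi.2 (by norm_num))) fun x hx => ?_
  rw [interior_Ici] at hx
  have hx1 : 0 < x + 1 := by linarith [mem_Ioi.1 hx]
  rw [(hasDerivAt_hfun hx).deriv, sub_neg]
  exact sqrt_one_sub_sq_lt_arccos (by rw [div_lt_one hx1]; linarith)

lemma hfun_zero : hfun 0 = 1 := by
  norm_num [hfun]

lemma hfun_pos {x : ℝ} (hx : -1 < x) : 0 < hfun x := by
  have hx1 : 0 < x + 1 := by linarith
  rw [hfun_eq_mul hx1.ne']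
  exact mul_pos hx1 (sub_pos.2 (mul_arccos_lt_sqrt_one_sub_sq (by rw [div_lt_one hx1]; linarith)))

lemma hfun_le_sqrt {x : ℝ} (hx : 0 ≤ x) : hfun x ≤ √(1 - (x / (x + 1)) ^ 2) := by
  have := mul_le_mul_of_nonneg_left (sqrt_one_sub_sq_le_arccos (x / (x + 1))) hx
  rw [hfun]
  linarith

lemma tendsto_div_add_one_atTop : Tendsto (fun x : ℝ => x / (x + 1)) atTop (𝓝 1) := by
  have h : Tendsto (fun x : ℝ => 1 - (x + 1)⁻¹) atTop (𝓝 (1 - 0)) := tendsto_const_nhds.sub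
    (tendsto_inv_atTop_zero.comp (tendsto_atTop_add_const_right atTop 1 tendsto_id))
  rw [sub_zero] at h
  refine h.congr' ?_
  filter_upwards [eventually_gt_atTop 0] with x hx
  field_simp
  ring

lemma tendsto_hfun_atTop : Tendsto hfun atTop (𝓝 0) := by
  have hsqrt : Tendsto (fun x : ℝ => √(1 - (x / (x + 1)) ^ 2)) atTop (𝓝 0) := by
    have hc : Continuous fun t : ℝ => √(1 - t ^ 2) := by fun_prop
    simpa [Function.comp_def] using (hc.tendsto 1).comp tendsto_div_add_one_atTop
  refine tendsto_of_tendsto_of_tendsto_of_le_of_le' tendsto_const_nhds hsqrt ?_ ?_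
  · filter_upwards [eventually_ge_atTop 0] with x hx
    exact (hfun_pos (by linarith)).le
  · filter_upwards [eventually_ge_atTop 0] with x hx
    exact hfun_le_sqrt hx

lemma surjOn_hfun : SurjOn hfun (Ici 0) (Ioc 0 1) := by
  intro y ⟨hy₀, hy₁⟩
  obtain ⟨M, hM, hM₀⟩ :=
    ((tendsto_hfun_atTop.eventually_lt_const hy₀).and (eventually_ge_atTop 0)).exists
  obtain ⟨x, hx, rfl⟩ := intermediate_value_Icc' hM₀
    (continuousOn_hfun.mono fun z hz => show -1 < z by linarith [hz.1])
    ⟨hM.le, hfun_zero ▸ hy₁⟩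
  exact ⟨x, hx.1, rfl⟩

/-- The function `h` is continuous and strictly decreasing on
`[0,∞)`, satisfies `h(0) = 1`, `h(x) > 0` for all `x ≥ 0`, and `h(x) → 0` as
`x → ∞`; consequently `h` is a bijection from `[0,∞)` onto `(0,1]` and admits an
inverse `h⁻¹ : (0,1] → [0,∞)`. -/
theorem hfun_properties :
    ContinuousOn hfun (Set.Ici 0) ∧
    StrictAntiOn hfun (Set.Ici 0) ∧
    hfun 0 = 1 ∧
    (∀ x : ℝ, 0 ≤ x → 0 < hfun x) ∧
    Tendsto hfun atTop (𝓝 0) ∧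
    Set.BijOn hfun (Set.Ici 0) (Set.Ioc 0 1) ∧
    ∃ g : ℝ → ℝ, Set.InvOn g hfun (Set.Ici 0) (Set.Ioc 0 1) := by
  have hanti : StrictAntiOn hfun (Ici 0) :=
    strictAntiOn_hfun.mono (Ici_subset_Ici.2 (by norm_num))
  have hpos : ∀ x : ℝ, 0 ≤ x → 0 < hfun x := fun x hx => hfun_pos (by linarith)
  have hmaps : MapsTo hfun (Ici 0) (Ioc 0 1) := fun x hx =>
    ⟨hpos x hx, hfun_zero ▸ hanti.antitoneOn self_mem_Ici hx hx⟩
  have hbij : BijOn hfun (Ici 0) (Ioc 0 1) := ⟨hmaps, hanti.injOn, surjOn_hfun⟩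
  exact ⟨continuousOn_hfun.mono (Ici_subset_Ioi.2 (by norm_num)), hanti, hfun_zero, hpos,
    tendsto_hfun_atTop, hbij, _, hbij.invOn_invFunOn⟩
end

section
/- For every real r with |r| ≤ 1, the arcsine function is given by the convergent power series arcsin(r) = Σ_{i=0}^{∞} ((2i−1)!!/((2i)!!·(2i+1)))·r^{2i+1}, where the double factorial is n!! = Π_{k=0}^{⌈n/2⌉−1}(n−2k) with the conventions 0!! = 1 and (−1)!! = 1 (so the i = 0 coefficient is 1). -/
/-!
The coefficients `(2n-1)‼ / (2n)‼` are the binomial coefficients `choose (n - 1/2) n`, so the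
binomial series gives `∑ (2n-1)‼ / (2n)‼ * x ^ (2n) = 1 / √(1 - x ^ 2)` for `|x| < 1`.
Differentiating term by term, the odd series of the theorem has the same derivative as `arcsin`
on `(-1, 1)` and vanishes at `0`, so it equals `arcsin` there. At `x = ±1` the coefficients are
nonnegative, so for `0 < x < 1` the partial sums at `x` sit below `arcsin x` and the full series
at `1` sits above it; letting `x → 1⁻` squeezes the sum at `1` to `arcsin 1 = π / 2`.
-/

open Real Filter Topology Set
open scoped Nat

noncomputable def invSqrtCoeff (n : ℕ) : ℝ := ((2 * n - 1)‼ : ℝ) / (2 * n)‼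

noncomputable def arcsinCoeff (n : ℕ) : ℝ := ((2 * n - 1)‼ : ℝ) / ((2 * n)‼ * (2 * n + 1))

lemma ascPochhammer_eval_one_half (n : ℕ) :
    (ascPochhammer ℝ n).eval (1 / 2 : ℝ) = (2 * n - 1)‼ / 2 ^ n := by
  induction n with
  | zero => simp
  | succ n ih =>
    rw [ascPochhammer_succ_eval, ih, show 2 * (n + 1) - 1 = 2 * n + 1 by omega,
      Nat.doubleFactorial_add_one]
    push_cast
    ring

lemma Ring.choose_one_half_add_sub_one (n : ℕ) :
    Ring.choose ((1 / 2 : ℝ) + n - 1) n = invSqrtCoeff n := by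
  rw [Ring.choose_eq_smul, Polynomial.descPochhammer_smeval_eq_ascPochhammer,
    Polynomial.ascPochhammer_smeval_eq_eval, show (1 / 2 : ℝ) + n - 1 - n + 1 = 1 / 2 by ring,
    ascPochhammer_eval_one_half, invSqrtCoeff, Nat.doubleFactorial_two_mul, smul_eq_mul]
  push_cast
  field_simp

lemma hasSum_invSqrtCoeff_mul_pow {y : ℝ} (hy : |y| < 1) :
    HasSum (fun n ↦ invSqrtCoeff n * y ^ n) (1 / √(1 - y)) := by
  have h := (one_div_one_sub_rpow_hasFPowerSeriesOnBall_zero (1 / 2)).hasSum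
    (y := y) (by simpa [enorm_eq_nnnorm, ← NNReal.coe_lt_coe] using hy)
  rw [zero_add, ← Real.sqrt_eq_rpow] at h
  simpa only [FormalMultilinearSeries.ofScalars_apply_eq', Ring.choose_one_half_add_sub_one,
    smul_eq_mul] using h

lemma invSqrtCoeff_nonneg (n : ℕ) : 0 ≤ invSqrtCoeff n := by
  unfold invSqrtCoeff; positivity

lemma arcsinCoeff_eq_div (n : ℕ) : arcsinCoeff n = invSqrtCoeff n / (2 * n + 1) := by
  rw [arcsinCoeff, invSqrtCoeff, div_div]

lemma arcsinCoeff_nonneg (n : ℕ) : 0 ≤ arcsinCoeff n := by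
  rw [arcsinCoeff_eq_div]; have := invSqrtCoeff_nonneg n; positivity

lemma hasDerivAt_arcsinCoeff_mul_pow (n : ℕ) (y : ℝ) :
    HasDerivAt (fun z ↦ arcsinCoeff n * z ^ (2 * n + 1)) (invSqrtCoeff n * y ^ (2 * n)) y := by
  refine ((hasDerivAt_pow (2 * n + 1) y).const_mul (arcsinCoeff n)).congr_deriv ?_
  rw [arcsinCoeff_eq_div, Nat.add_sub_cancel]
  push_cast
  field_simp

lemma norm_invSqrtCoeff_mul_pow_le {t y : ℝ} (hy : |y| ≤ t) (n : ℕ) :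
    ‖invSqrtCoeff n * y ^ (2 * n)‖ ≤ invSqrtCoeff n * (t ^ 2) ^ n := by
  rw [norm_mul, Real.norm_of_nonneg (invSqrtCoeff_nonneg n), norm_pow, Real.norm_eq_abs, pow_mul]
  exact mul_le_mul_of_nonneg_left
    (pow_le_pow_left₀ (by positivity) (pow_le_pow_left₀ (abs_nonneg y) hy 2) n)
    (invSqrtCoeff_nonneg n)

lemma summable_arcsinCoeff_mul_pow_and_hasDerivAt {x : ℝ} (hx : |x| < 1) :
    Summable (fun n ↦ arcsinCoeff n * x ^ (2 * n + 1)) ∧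
      HasDerivAt (fun z ↦ ∑' n, arcsinCoeff n * z ^ (2 * n + 1)) (1 / √(1 - x ^ 2)) x := by
  obtain ⟨t, hxt, ht1⟩ := exists_between hx
  have ht0 : 0 < t := (abs_nonneg x).trans_lt hxt
  have hu := (hasSum_invSqrtCoeff_mul_pow (y := t ^ 2)
    (by rw [abs_of_pos (by positivity)]; exact pow_lt_one₀ ht0.le ht1 two_ne_zero)).summable
  have hbound : ∀ n, ∀ y ∈ Metric.ball (0 : ℝ) t,
      ‖invSqrtCoeff n * y ^ (2 * n)‖ ≤ invSqrtCoeff n * (t ^ 2) ^ n := fun n y hy ↦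
    norm_invSqrtCoeff_mul_pow_le (by simpa using (Metric.mem_ball.1 hy).le) n
  have hx_mem : x ∈ Metric.ball (0 : ℝ) t := by simpa using hxt
  have hsum0 : Summable fun n ↦ arcsinCoeff n * (0 : ℝ) ^ (2 * n + 1) := by simp
  have hg : ∀ n, ∀ y ∈ Metric.ball (0 : ℝ) t, HasDerivAt (fun z ↦ arcsinCoeff n * z ^ (2 * n + 1))
      (invSqrtCoeff n * y ^ (2 * n)) y := fun n y _ ↦ hasDerivAt_arcsinCoeff_mul_pow n y
  refine ⟨summable_of_summable_hasDerivAt_of_isPreconnected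
    (g := fun n z ↦ arcsinCoeff n * z ^ (2 * n + 1)) (g' := fun n y ↦ invSqrtCoeff n * y ^ (2 * n))
    hu Metric.isOpen_ball (convex_ball 0 t).isPreconnected hg hbound (Metric.mem_ball_self ht0)
    hsum0 hx_mem, ?_⟩
  have h := hasDerivAt_tsum_of_isPreconnected
    (g := fun n z ↦ arcsinCoeff n * z ^ (2 * n + 1)) (g' := fun n y ↦ invSqrtCoeff n * y ^ (2 * n))
    hu Metric.isOpen_ball (convex_ball 0 t).isPreconnected hg hbound (Metric.mem_ball_self ht0)
    hsum0 hx_mem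
  have hx2 := hasSum_invSqrtCoeff_mul_pow (y := x ^ 2)
    (by rwa [abs_of_nonneg (sq_nonneg x), sq_lt_one_iff_abs_lt_one])
  simp only [← pow_mul] at hx2
  rwa [hx2.tsum_eq] at h

lemma hasSum_arcsinCoeff_mul_pow {x : ℝ} (hx : |x| < 1) :
    HasSum (fun n ↦ arcsinCoeff n * x ^ (2 * n + 1)) (arcsin x) := by
  set S := fun z ↦ ∑' n, arcsinCoeff n * z ^ (2 * n + 1)
  have hS : ∀ y ∈ Ioo (-1 : ℝ) 1, HasDerivAt S (1 / √(1 - y ^ 2)) y := fun y hy ↦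
    (summable_arcsinCoeff_mul_pow_and_hasDerivAt (abs_lt.2 hy)).2
  have harcsin : ∀ y ∈ Ioo (-1 : ℝ) 1, HasDerivAt arcsin (1 / √(1 - y ^ 2)) y := fun y hy ↦
    hasDerivAt_arcsin hy.1.ne' hy.2.ne
  have hS0 : arcsin 0 = S 0 := by simp [S]
  have hEq : EqOn arcsin S (Ioo (-1) 1) := isOpen_Ioo.eqOn_of_deriv_eq isPreconnected_Ioo
    (fun y hy ↦ (harcsin y hy).differentiableAt.differentiableWithinAt)
    (fun y hy ↦ (hS y hy).differentiableAt.differentiableWithinAt)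
    (fun y hy ↦ (harcsin y hy).deriv.trans (hS y hy).deriv.symm) (by norm_num) hS0
  rw [hEq (abs_lt.1 hx)]
  exact (summable_arcsinCoeff_mul_pow_and_hasDerivAt hx).1.hasSum

theorem hasSum_of_tendsto_nhdsWithin_lt_one_of_nonneg {a : ℕ → ℝ} (ha : ∀ n, 0 ≤ a n)
    (e : ℕ → ℕ) {f : ℝ → ℝ} {L : ℝ}
    (hf : ∀ x ∈ Ioo (0 : ℝ) 1, HasSum (fun n ↦ a n * x ^ e n) (f x))
    (hL : Tendsto f (𝓝[<] 1) (𝓝 L)) : HasSum a L := by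
  have hIoo : Ioo (0 : ℝ) 1 ∈ 𝓝[<] 1 := Ioo_mem_nhdsLT zero_lt_one
  have hpartial : ∀ N, ∑ n ∈ Finset.range N, a n ≤ L := by
    intro N
    have hlim : Tendsto (fun x : ℝ ↦ ∑ n ∈ Finset.range N, a n * x ^ e n) (𝓝[<] 1)
        (𝓝 (∑ n ∈ Finset.range N, a n)) := by
      have hc : Continuous fun x : ℝ ↦ ∑ n ∈ Finset.range N, a n * x ^ e n := by fun_prop
      simpa using (hc.tendsto 1).mono_left nhdsWithin_le_nhds
    refine le_of_tendsto_of_tendsto hlim hL (eventually_of_mem hIoo fun x hx ↦ ?_)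
    exact sum_le_hasSum _ (fun n _ ↦ mul_nonneg (ha n) (pow_nonneg hx.1.le _)) (hf x hx)
  have hsum : Summable a := summable_of_sum_range_le ha hpartial
  refine le_antisymm (Real.tsum_le_of_sum_range_le ha hpartial) ?_ ▸ hsum.hasSum
  refine le_of_tendsto hL (eventually_of_mem hIoo fun x hx ↦ ?_)
  refine hasSum_le (fun n ↦ ?_) (hf x hx) hsum.hasSum
  exact mul_le_of_le_one_right (ha n) (pow_le_one₀ hx.1.le hx.2.le)

lemma hasSum_arcsinCoeff : HasSum arcsinCoeff (π / 2) := by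
  rw [← arcsin_one]
  refine hasSum_of_tendsto_nhdsWithin_lt_one_of_nonneg arcsinCoeff_nonneg (fun n ↦ 2 * n + 1)
    (fun x hx ↦ hasSum_arcsinCoeff_mul_pow (abs_lt.2 ⟨by linarith [hx.1], hx.2⟩))
    continuous_arcsin.continuousWithinAt.tendsto

/-- For every real `r` with `|r| ≤ 1`, the arcsine function is
given by the convergent power series
`arcsin r = ∑_{i=0}^∞ ((2i−1)!!/((2i)!!·(2i+1)))·r^(2i+1)`,
where `n!!` is the double factorial (with `0!! = (−1)!! = 1`; note that in `ℕ`
`2·0 − 1 = 0`, so the `i = 0` coefficient is `0!!/(0!!·1) = 1`). -/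
theorem arcsin_hasSum_doubleFactorial_series (r : ℝ) (hr : |r| ≤ 1) :
    HasSum
      (fun i : ℕ =>
        ((Nat.doubleFactorial (2 * i - 1) : ℝ) /
          ((Nat.doubleFactorial (2 * i) : ℝ) * (2 * i + 1))) * r ^ (2 * i + 1))
      (Real.arcsin r) := by
  change HasSum (fun n ↦ arcsinCoeff n * r ^ (2 * n + 1)) (arcsin r)
  rcases hr.lt_or_eq with hr | hr
  · exact hasSum_arcsinCoeff_mul_pow hr
  rcases (abs_eq zero_le_one).1 hr with rfl | rfl
  · simpa [arcsin_one] using hasSum_arcsinCoeff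
  · simpa [arcsin_neg, (odd_two_mul_add_one _).neg_one_pow] using hasSum_arcsinCoeff.neg
end

section
/- Let c ≥ 0, γ ∈ [0, π/2], and let P ∈ ℝ^{m×m} be a matrix with induced ∞-norm ‖P‖∞ ≤ c. If η ∈ ℝ^m satisfies ‖η‖∞ ≤ (c+1)·sin(γ) − c·γ, then for every φ ∈ ℝ^m with ‖φ‖∞ ≤ sin(γ) the vector H_η(φ) = η − P·(arcsin(φ) − φ) satisfies ‖H_η(φ)‖∞ ≤ sin(γ). In other words, H_η maps the closed polydisk D(0, sin γ) = {φ ∈ ℝ^m : ‖φ‖∞ ≤ sin γ} into itself. -/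
/-!
Since `sin` is `1`-Lipschitz, `arcsin` expands distances, so `x ↦ arcsin x - x` is an odd
increasing function on `[-1, 1]`; on the polydisk of radius `sin γ` every entry of
`arcsin φ - φ` is therefore bounded by `arcsin (sin γ) - sin γ = γ - sin γ`. The row-sum bound
gives `‖P (arcsin φ - φ)‖∞ ≤ c (γ - sin γ)`, and the triangle inequality with the bound on `η`
closes up to exactly `sin γ`.
-/

open Matrix

/-- Induced `∞`-norm of a square matrix: maximum absolute row sum. -/
noncomputable def matInfNorm {m : ℕ} (P : Matrix (Fin m) (Fin m) ℝ) : ℝ :=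
  ⨆ i, ∑ j, |P i j|

namespace Real

theorem sub_le_arcsin_sub_arcsin {x y : ℝ} (hx : -1 ≤ x) (hy : y ≤ 1) (hxy : x ≤ y) :
    y - x ≤ arcsin y - arcsin x := by
  have hsin := abs_sin_sub_sin_le (arcsin y) (arcsin x)
  rw [sin_arcsin hx (hxy.trans hy), sin_arcsin (hx.trans hxy) hy,
    abs_of_nonneg (sub_nonneg.2 (monotone_arcsin hxy))] at hsin
  exact (le_abs_self _).trans hsin

theorem arcsin_sub_self_monotoneOn : MonotoneOn (fun x => arcsin x - x) (Set.Icc (-1) 1) :=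
  fun x hx y hy hxy => by
    have := sub_le_arcsin_sub_arcsin hx.1 hy.2 hxy
    dsimp only
    linarith

theorem abs_arcsin_sub_self_le {x s : ℝ} (hx : |x| ≤ s) (hs : s ≤ 1) :
    |arcsin x - x| ≤ arcsin s - s := by
  obtain ⟨hsx, hxs⟩ := abs_le.1 hx
  have hmem : x ∈ Set.Icc (-1 : ℝ) 1 := ⟨by linarith, hxs.trans hs⟩
  have upper := arcsin_sub_self_monotoneOn hmem ⟨by linarith, hs⟩ hxs
  have lower := arcsin_sub_self_monotoneOn ⟨by linarith, by linarith⟩ hmem hsx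
  simp only [arcsin_neg] at upper lower
  exact abs_le.2 ⟨by linarith, upper⟩

theorem norm_arcsin_sub_self_le {ι : Type*} [Fintype ι] {φ : ι → ℝ} {s : ℝ} (hφ : ‖φ‖ ≤ s)
    (hs : s ≤ 1) : ‖fun i => arcsin (φ i) - φ i‖ ≤ arcsin s - s := by
  have hbound i : |arcsin (φ i) - φ i| ≤ arcsin s - s :=
    abs_arcsin_sub_self_le ((norm_le_pi_norm φ i).trans hφ) hs
  have hzero : |arcsin 0 - 0| ≤ arcsin s - s :=
    abs_arcsin_sub_self_le (by simpa using (norm_nonneg φ).trans hφ) hs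
  exact (pi_norm_le_iff_of_nonneg ((abs_nonneg _).trans hzero)).2 hbound

end Real

theorem sum_abs_le_matInfNorm {m : ℕ} (P : Matrix (Fin m) (Fin m) ℝ) (i : Fin m) :
    ∑ j, |P i j| ≤ matInfNorm P :=
  le_ciSup (f := fun i => ∑ j, |P i j|) (Set.finite_range _).bddAbove i

theorem norm_mulVec_le_matInfNorm_mul {m : ℕ} (P : Matrix (Fin m) (Fin m) ℝ) (v : Fin m → ℝ) :
    ‖P *ᵥ v‖ ≤ matInfNorm P * ‖v‖ := by
  have hP : 0 ≤ matInfNorm P :=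
    Real.iSup_nonneg fun i => Finset.sum_nonneg fun j _ => abs_nonneg (P i j)
  refine (pi_norm_le_iff_of_nonneg (mul_nonneg hP (norm_nonneg v))).2 fun i => ?_
  calc ‖(P *ᵥ v) i‖ = |∑ j, P i j * v j| := rfl
    _ ≤ ∑ j, |P i j| * |v j| := by
      simpa only [abs_mul] using Finset.abs_sum_le_sum_abs (fun j => P i j * v j) Finset.univ
    _ ≤ ∑ j, |P i j| * ‖v‖ := by gcongr with j; exact norm_le_pi_norm v j
    _ = (∑ j, |P i j|) * ‖v‖ := (Finset.sum_mul ..).symm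
    _ ≤ matInfNorm P * ‖v‖ := by gcongr; exact sum_abs_le_matInfNorm P i

/-- Let `c ≥ 0`, `γ ∈ [0, π/2]`, and `P` a matrix with induced
`∞`-norm `‖P‖∞ ≤ c`. If `‖η‖∞ ≤ (c+1)·sin γ − c·γ`, then for every `φ` with
`‖φ‖∞ ≤ sin γ` the vector `H_η(φ) = η − P·(arcsin(φ) − φ)` satisfies
`‖H_η(φ)‖∞ ≤ sin γ`; i.e. `H_η` maps the polydisk `D(0, sin γ)` into itself. -/
theorem Heta_maps_polydisk_into_itself
    {m : ℕ} (c γ : ℝ) (hc : 0 ≤ c) (hγ : γ ∈ Set.Icc 0 (Real.pi / 2))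
    (P : Matrix (Fin m) (Fin m) ℝ) (hP : matInfNorm P ≤ c)
    (η : Fin m → ℝ) (hη : ‖η‖ ≤ (c + 1) * Real.sin γ - c * γ)
    (φ : Fin m → ℝ) (hφ : ‖φ‖ ≤ Real.sin γ) :
    ‖η - P.mulVec (fun i => Real.arcsin (φ i) - φ i)‖ ≤ Real.sin γ := by
  have harcsin : Real.arcsin (Real.sin γ) = γ :=
    Real.arcsin_sin (by linarith [Real.pi_pos, hγ.1]) hγ.2
  have hv := Real.norm_arcsin_sub_self_le hφ (Real.sin_le_one γ)
  rw [harcsin] at hv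
  have hPv := (norm_mulVec_le_matInfNorm_mul P _).trans
    (mul_le_mul hP hv (norm_nonneg _) hc)
  calc _ ≤ ‖η‖ + ‖P *ᵥ fun i => Real.arcsin (φ i) - φ i‖ := norm_sub_le _ _
    _ ≤ ((c + 1) * Real.sin γ - c * γ) + c * (γ - Real.sin γ) := add_le_add hη hPv
    _ = Real.sin γ := by ring
end

section
/- Let η ∈ ℝ^m satisfy ‖η‖∞ < h(‖P_cyc‖∞), let y ≥ 0 be the unique number with h(y) = ‖η‖∞ (i.e. y = h⁻¹(‖η‖∞)), and set γ* = arccos(y/(y+1)) ∈ [0, π/2). Then there exists a unique φ* ∈ ℝ^m with ‖φ*‖∞ ≤ sin(γ*) satisfying the unconstrained edge balance equation η = P_cut φ* + P_cyc arcsin(φ*). -/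
open Matrix Filter Topology

lemma hfun_hasDerivAt {x : ℝ} (hx : 0 ≤ x) :
    HasDerivAt hfun (Real.sqrt (1 - (x / (x + 1)) ^ 2) - Real.arccos (x / (x + 1))) x := by
  have hx1 : (0:ℝ) < x + 1 := by linarith
  set u : ℝ := x / (x + 1) with hu_def
  have hu0 : 0 ≤ u := div_nonneg hx hx1.le
  have hu1 : u < 1 := by
    rw [hu_def, div_lt_one hx1]; linarith
  have hune1 : u ≠ 1 := ne_of_lt hu1
  have hune_1 : u ≠ -1 := by linarith
  have hpos : 0 < 1 - u ^ 2 := by nlinarith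
  have hsq : Real.sqrt (1 - u ^ 2) ^ 2 = 1 - u ^ 2 := Real.sq_sqrt hpos.le
  have hs0 : 0 < Real.sqrt (1 - u ^ 2) := Real.sqrt_pos.2 hpos
  have hu : HasDerivAt (fun t : ℝ => t / (t + 1)) (1 / (x + 1) ^ 2) x := by
    have h := (hasDerivAt_id x).div ((hasDerivAt_id x).add_const 1) hx1.ne'
    refine h.congr_deriv ?_
    simp only [id]
    ring
  have hinner : HasDerivAt (fun t : ℝ => 1 - (t / (t + 1)) ^ 2)
      (-((2 : ℕ) * u ^ (2 - 1) * (1 / (x + 1) ^ 2))) x := (hu.pow 2).const_sub 1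
  have hsqrt : HasDerivAt (fun t : ℝ => Real.sqrt (1 - (t / (t + 1)) ^ 2))
      ((-((2 : ℕ) * u ^ (2 - 1) * (1 / (x + 1) ^ 2))) / (2 * Real.sqrt (1 - u ^ 2))) x := by
    exact hinner.sqrt (by simpa using hpos.ne')
  have hA : HasDerivAt (fun t : ℝ => (t + 1) * Real.sqrt (1 - (t / (t + 1)) ^ 2))
      (1 * Real.sqrt (1 - u ^ 2) +
        (x + 1) * ((-((2 : ℕ) * u ^ (2 - 1) * (1 / (x + 1) ^ 2))) / (2 * Real.sqrt (1 - u ^ 2)))) x := by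
    exact ((hasDerivAt_id x).add_const 1).mul hsqrt
  have harccos : HasDerivAt (fun t : ℝ => Real.arccos (t / (t + 1)))
      ((-(1 / Real.sqrt (1 - u ^ 2))) * (1 / (x + 1) ^ 2)) x :=
    (Real.hasDerivAt_arccos hune_1 hune1).comp (h₂ := Real.arccos) (h := fun t : ℝ => t / (t + 1)) x hu
  have hB : HasDerivAt (fun t : ℝ => t * Real.arccos (t / (t + 1)))
      (1 * Real.arccos u + x * ((-(1 / Real.sqrt (1 - u ^ 2))) * (1 / (x + 1) ^ 2))) x :=
    (hasDerivAt_id x).mul harccos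
  have := hA.sub hB
  refine this.congr_deriv ?_
  have hx1' : (x + 1) ≠ 0 := hx1.ne'
  have hxu : u * (x + 1) = x := by rw [hu_def]; field_simp
  push_cast
  field_simp
  linear_combination (-1) * hxu

lemma hfun_strictAntiOn : StrictAntiOn hfun (Set.Ici 0) := by
  apply strictAntiOn_of_deriv_neg (convex_Ici 0)
  · intro x hx
    exact (hfun_hasDerivAt hx).continuousAt.continuousWithinAt
  · intro x hx
    rw [interior_Ici] at hx
    have hx0 : (0:ℝ) ≤ x := le_of_lt hx
    rw [(hfun_hasDerivAt hx0).deriv]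
    have hx1 : (0:ℝ) < x + 1 := by linarith
    have hu1 : x / (x + 1) < 1 := by rw [div_lt_one hx1]; linarith
    have hpos : 0 < Real.arccos (x / (x + 1)) := Real.arccos_pos.2 hu1
    have := Real.sin_lt hpos
    rw [Real.sin_arccos] at this
    linarith

lemma matInfNorm_nonneg {m : ℕ} (P : Matrix (Fin m) (Fin m) ℝ) : 0 ≤ matInfNorm P :=
  Real.iSup_nonneg fun i => Finset.sum_nonneg fun j _ => abs_nonneg _

lemma mulVec_norm_le {m : ℕ} (P : Matrix (Fin m) (Fin m) ℝ) (x : Fin m → ℝ) :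
    ‖P.mulVec x‖ ≤ matInfNorm P * ‖x‖ := by
  rw [pi_norm_le_iff_of_nonneg (mul_nonneg (matInfNorm_nonneg P) (norm_nonneg x))]
  intro i
  have h1 : ‖P.mulVec x i‖ ≤ ∑ j, |P i j| * ‖x‖ := by
    calc ‖P.mulVec x i‖ = |∑ j, P i j * x j| := by
          simp [Matrix.mulVec, dotProduct, Real.norm_eq_abs]
      _ ≤ ∑ j, |P i j * x j| := Finset.abs_sum_le_sum_abs _ _
      _ = ∑ j, |P i j| * |x j| := by simp [abs_mul]
      _ ≤ ∑ j, |P i j| * ‖x‖ := Finset.sum_le_sum fun j _ =>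
          mul_le_mul_of_nonneg_left (by rw [← Real.norm_eq_abs]; exact norm_le_pi_norm x j) (abs_nonneg _)
  refine h1.trans ?_
  rw [← Finset.sum_mul]
  have h2 : (∑ j, |P i j|) ≤ matInfNorm P :=
    le_ciSup (f := fun i => ∑ j, |P i j|) (Set.Finite.bddAbove (Set.finite_range _)) i
  exact mul_le_mul_of_nonneg_right h2 (norm_nonneg x)

/-- Let `η` satisfy `‖η‖∞ < h(‖P_cyc‖∞)`, let `y = h⁻¹(‖η‖∞)`
and `γ* = arccos(y/(y+1)) ∈ [0, π/2)`. Then there exists a unique `φ*` with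
`‖φ*‖∞ ≤ sin γ*` satisfying the unconstrained edge balance equation
`η = P_cut φ* + P_cyc arcsin(φ*)`. -/
theorem unconstrained_edge_balance_existence_uniqueness
    {n m : ℕ} (hn : 2 ≤ n)
    (B : Matrix (Fin n) (Fin m) ℝ)
    (hB : ∀ e : Fin m, ∃ i j : Fin n, i ≠ j ∧ B i e = 1 ∧ B j e = -1 ∧
      ∀ k : Fin n, k ≠ i → k ≠ j → B k e = 0)
    (hconn : ∀ x : Fin n → ℝ, B.transpose.mulVec x = 0 ↔ ∃ c : ℝ, x = fun _ => c)
    (a : Fin m → ℝ) (ha : ∀ e, 0 < a e)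
    (M : Matrix (Fin n) (Fin n) ℝ)
    (hM1 : (B * Matrix.diagonal a * B.transpose) * M * (B * Matrix.diagonal a * B.transpose)
        = B * Matrix.diagonal a * B.transpose)
    (hM2 : M * (B * Matrix.diagonal a * B.transpose) * M = M)
    (hM3 : (M * (B * Matrix.diagonal a * B.transpose))ᵀ = M * (B * Matrix.diagonal a * B.transpose))
    (hM4 : ((B * Matrix.diagonal a * B.transpose) * M)ᵀ = (B * Matrix.diagonal a * B.transpose) * M)
    (η : Fin m → ℝ) (y : ℝ) (hy0 : 0 ≤ y) :
    let Pcut : Matrix (Fin m) (Fin m) ℝ := B.transpose * M * (B * Matrix.diagonal a)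
    let Pcyc : Matrix (Fin m) (Fin m) ℝ := 1 - Pcut
    ‖η‖ < hfun (matInfNorm Pcyc) →
    hfun y = ‖η‖ →
    Real.arccos (y / (y + 1)) ∈ Set.Ico 0 (Real.pi / 2) ∧
    ∃! φstar : Fin m → ℝ,
      ‖φstar‖ ≤ Real.sin (Real.arccos (y / (y + 1))) ∧
      η = Pcut.mulVec φstar + Pcyc.mulVec (fun e => Real.arcsin (φstar e)) := by
  intro Pcut Pcyc hlt heq
  set c := matInfNorm Pcyc with hc_def
  have hc0 : 0 ≤ c := matInfNorm_nonneg _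
  have hcy : c < y := by
    rcases lt_or_ge c y with h | h
    · exact h
    · exfalso
      rcases eq_or_lt_of_le h with h' | h'
      · rw [← h'] at hlt; linarith
      · have := hfun_strictAntiOn (Set.mem_Ici.2 hy0) (Set.mem_Ici.2 hc0) h'
        linarith
  have hy : 0 < y := lt_of_le_of_lt hc0 hcy
  have hy1 : 0 < y + 1 := by linarith
  set u := y / (y + 1) with hu_def
  have hu0 : 0 < u := div_pos hy hy1
  have hu1 : u < 1 := by rw [hu_def, div_lt_one hy1]; linarith
  set γ := Real.arccos u with hγ_def
  have hγ0 : 0 ≤ γ := Real.arccos_nonneg u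
  have hγpos : 0 < γ := Real.arccos_pos.2 hu1
  have hγlt : γ < Real.pi / 2 := Real.arccos_lt_pi_div_two.2 hu0
  set s := Real.sin γ with hs_def
  have hs_sqrt : s = Real.sqrt (1 - u ^ 2) := by rw [hs_def, hγ_def, Real.sin_arccos]
  have hs0 : 0 ≤ s := by rw [hs_sqrt]; positivity
  have hu2 : 0 < 1 - u ^ 2 := by nlinarith
  have hssq : s ^ 2 = 1 - u ^ 2 := by rw [hs_sqrt]; exact Real.sq_sqrt hu2.le
  have hs1 : s < 1 := by nlinarith
  have hsγ : s < γ := by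
    have := Real.sin_lt hγpos
    rw [← hs_def] at this; exact this
  have hγs : γ = Real.arcsin s := by
    rw [hs_def]
    exact (Real.arcsin_sin (by linarith [Real.pi_pos]) hγlt.le).symm
  have hηeq : ‖η‖ = (y + 1) * s - y * γ := by
    rw [← heq]; unfold hfun
    rw [← hu_def, ← hγ_def, ← hs_sqrt]
  set g : ℝ → ℝ := fun t => Real.arcsin t - t with hg_def
  have hIcc : Convex ℝ (Set.Icc (-s) s) := convex_Icc _ _
  have hgderiv : ∀ t ∈ Set.Icc (-s) s,
      HasDerivAt g (1 / Real.sqrt (1 - t ^ 2) - 1) t := by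
    intro t ht
    have ht1 : t ≠ 1 := by have := ht.2; intro h; rw [h] at this; linarith
    have ht_1 : t ≠ -1 := by have := ht.1; intro h; rw [h] at this; linarith
    exact (Real.hasDerivAt_arcsin ht_1 ht1).sub (hasDerivAt_id t)
  have hsqrt_facts : ∀ t ∈ Set.Icc (-s) s,
      u ≤ Real.sqrt (1 - t ^ 2) ∧ Real.sqrt (1 - t ^ 2) ≤ 1 := by
    intro t ht
    have ht2 : t ^ 2 ≤ s ^ 2 := sq_le_sq' ht.1 ht.2
    constructor
    · have h1 : u = Real.sqrt (u ^ 2) := (Real.sqrt_sq hu0.le).symm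
      rw [h1]
      exact Real.sqrt_le_sqrt (by linarith [ht2, hssq])
    · exact Real.sqrt_le_one.mpr (by nlinarith [sq_nonneg t])
  have hgd_nonneg : ∀ t ∈ Set.Icc (-s) s, 0 ≤ 1 / Real.sqrt (1 - t ^ 2) - 1 := by
    intro t ht
    obtain ⟨h1, h2⟩ := hsqrt_facts t ht
    have hpos : 0 < Real.sqrt (1 - t ^ 2) := lt_of_lt_of_le hu0 h1
    rw [sub_nonneg, le_div_iff₀ hpos, one_mul]; exact h2
  have hgd_le : ∀ t ∈ Set.Icc (-s) s, ‖1 / Real.sqrt (1 - t ^ 2) - 1‖ ≤ 1 / y := by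
    intro t ht
    obtain ⟨h1, h2⟩ := hsqrt_facts t ht
    have hpos : 0 < Real.sqrt (1 - t ^ 2) := lt_of_lt_of_le hu0 h1
    rw [Real.norm_eq_abs, abs_of_nonneg (hgd_nonneg t ht)]
    have h3 : 1 / Real.sqrt (1 - t ^ 2) ≤ 1 / u := one_div_le_one_div_of_le hu0 h1
    have h4 : 1 / u = (y + 1) / y := by rw [hu_def, one_div_div]
    have h5 : (y + 1) / y - 1 = 1 / y := by field_simp; ring
    linarith [h3, h4 ▸ h3]
  have hglip : ∀ t1 ∈ Set.Icc (-s) s, ∀ t2 ∈ Set.Icc (-s) s,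
      |g t2 - g t1| ≤ (1 / y) * |t2 - t1| := by
    intro t1 h1 t2 h2
    have := Convex.norm_image_sub_le_of_norm_hasDerivWithin_le
      (f := g) (f' := fun t => 1 / Real.sqrt (1 - t ^ 2) - 1) (s := Set.Icc (-s) s)
      (fun t ht => (hgderiv t ht).hasDerivWithinAt) hgd_le hIcc h1 h2
    simpa [Real.norm_eq_abs] using this
  have hgmono : MonotoneOn g (Set.Icc (-s) s) := by
    apply monotoneOn_of_hasDerivWithinAt_nonneg (f' := fun t => 1 / Real.sqrt (1 - t ^ 2) - 1) hIcc
    · exact (Real.continuous_arcsin.sub continuous_id).continuousOn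
    · intro t ht
      rw [interior_Icc] at ht
      exact (hgderiv t (Set.Ioo_subset_Icc_self ht)).hasDerivWithinAt
    · intro t ht
      rw [interior_Icc] at ht
      exact hgd_nonneg t (Set.Ioo_subset_Icc_self ht)
  have hγs_nonneg : 0 ≤ γ - s := by linarith
  have hg_self : ∀ t ∈ Set.Icc (-s) s, |g t| ≤ γ - s := by
    intro t ht
    have hsmem : s ∈ Set.Icc (-s) s := ⟨by linarith, le_rfl⟩
    have hnsmem : -s ∈ Set.Icc (-s) s := ⟨le_rfl, by linarith⟩
    have hgs : g s = γ - s := by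
      show Real.arcsin s - s = γ - s
      rw [← hγs]
    have hgns : g (-s) = -(γ - s) := by
      show Real.arcsin (-s) - (-s) = -(γ - s)
      rw [Real.arcsin_neg, ← hγs]; ring
    rw [abs_le]
    constructor
    · rw [← hgns]; exact hgmono hnsmem ht ht.1
    · rw [← hgs]; exact hgmono ht hsmem ht.2
  set F : (Fin m → ℝ) → (Fin m → ℝ) := fun φ => η - Pcyc.mulVec (fun e => g (φ e)) with hF_def
  have hPcyc_eq : Pcyc = 1 - Pcut := rfl
  have hFrw : ∀ φ : Fin m → ℝ,
      F φ - φ = η - (Pcut.mulVec φ + Pcyc.mulVec fun e => Real.arcsin (φ e)) := by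
    intro φ
    have h1 : (fun e => g (φ e)) = (fun e => Real.arcsin (φ e)) - φ := rfl
    have h2 : Pcyc.mulVec φ = φ - Pcut.mulVec φ := by
      rw [hPcyc_eq, Matrix.sub_mulVec, Matrix.one_mulVec]
    calc F φ - φ = η - Pcyc.mulVec ((fun e => Real.arcsin (φ e)) - φ) - φ := rfl
      _ = η - (Pcyc.mulVec (fun e => Real.arcsin (φ e)) - (φ - Pcut.mulVec φ)) - φ := by
          rw [Matrix.mulVec_sub, h2]
      _ = η - (Pcut.mulVec φ + Pcyc.mulVec fun e => Real.arcsin (φ e)) := by abel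
  have hfix_iff : ∀ φ : Fin m → ℝ,
      F φ = φ ↔ η = Pcut.mulVec φ + Pcyc.mulVec fun e => Real.arcsin (φ e) := by
    intro φ
    rw [← sub_eq_zero (a := F φ) (b := φ), hFrw φ, sub_eq_zero]
  have hmemIcc : ∀ (φ : Fin m → ℝ), ‖φ‖ ≤ s → ∀ e, φ e ∈ Set.Icc (-s) s := by
    intro φ hφ e
    have h1 : |φ e| ≤ ‖φ‖ := by rw [← Real.norm_eq_abs]; exact norm_le_pi_norm φ e
    rw [Set.mem_Icc]
    constructor <;> [linarith [neg_abs_le (φ e)]; linarith [le_abs_self (φ e)]]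
  have hball_self : ∀ φ : Fin m → ℝ, ‖φ‖ ≤ s → ‖F φ‖ ≤ s := by
    intro φ hφ
    have hgv : ‖(fun e => g (φ e))‖ ≤ γ - s := by
      rw [pi_norm_le_iff_of_nonneg hγs_nonneg]
      intro e
      rw [Real.norm_eq_abs]
      exact hg_self _ (hmemIcc φ hφ e)
    have h2 : ‖F φ‖ ≤ ‖η‖ + c * (γ - s) := by
      refine (norm_sub_le _ _).trans ?_
      have := (mulVec_norm_le Pcyc (fun e => g (φ e))).trans
        (mul_le_mul_of_nonneg_left hgv hc0)
      linarith
    rw [hηeq] at h2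
    nlinarith [mul_nonneg (sub_nonneg.2 hcy.le) hγs_nonneg]
  have hcontr : ∀ φ ψ : Fin m → ℝ, ‖φ‖ ≤ s → ‖ψ‖ ≤ s →
      ‖F φ - F ψ‖ ≤ (c / y) * ‖φ - ψ‖ := by
    intro φ ψ hφ hψ
    have hdiff : F φ - F ψ = Pcyc.mulVec ((fun e => g (ψ e)) - fun e => g (φ e)) := by
      rw [Matrix.mulVec_sub]
      show (η - Pcyc.mulVec fun e => g (φ e)) - (η - Pcyc.mulVec fun e => g (ψ e)) = _
      abel
    rw [hdiff]
    refine (mulVec_norm_le _ _).trans ?_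
    have hbd : ‖(fun e => g (ψ e)) - fun e => g (φ e)‖ ≤ (1 / y) * ‖φ - ψ‖ := by
      rw [pi_norm_le_iff_of_nonneg (mul_nonneg (by positivity) (norm_nonneg _))]
      intro e
      have h1 := hglip (φ e) (hmemIcc φ hφ e) (ψ e) (hmemIcc ψ hψ e)
      have h2 : |ψ e - φ e| ≤ ‖φ - ψ‖ := by
        rw [show |ψ e - φ e| = ‖(ψ - φ) e‖ by rw [Real.norm_eq_abs]; rfl, ← norm_sub_rev]
        exact norm_le_pi_norm (ψ - φ) e
      have h3 : ‖((fun e => g (ψ e)) - fun e => g (φ e)) e‖ = |g (ψ e) - g (φ e)| := by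
        rw [Real.norm_eq_abs]; rfl
      rw [h3]
      calc |g (ψ e) - g (φ e)| ≤ (1 / y) * |ψ e - φ e| := h1
        _ ≤ (1 / y) * ‖φ - ψ‖ := by
            refine mul_le_mul_of_nonneg_left h2 (by positivity)
    calc c * ‖(fun e => g (ψ e)) - fun e => g (φ e)‖ ≤ c * ((1 / y) * ‖φ - ψ‖) :=
          mul_le_mul_of_nonneg_left hbd hc0
      _ = (c / y) * ‖φ - ψ‖ := by ring
  set K : Set (Fin m → ℝ) := Metric.closedBall 0 s with hK
  have hKclosed : IsClosed K := Metric.isClosed_closedBall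
  haveI : CompleteSpace K := hKclosed.completeSpace_coe
  haveI : Nonempty K := ⟨⟨0, Metric.mem_closedBall_self hs0⟩⟩
  have hmemK : ∀ φ : Fin m → ℝ, φ ∈ K ↔ ‖φ‖ ≤ s := fun φ => mem_closedBall_zero_iff
  set T : K → K := fun φ => ⟨F φ.1, (hmemK _).2 (hball_self φ.1 ((hmemK _).1 φ.2))⟩ with hT
  have hk0 : 0 ≤ c / y := div_nonneg hc0 hy.le
  set k : NNReal := ⟨c / y, hk0⟩ with hk
  have hklt : k < 1 := by
    rw [← NNReal.coe_lt_coe]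
    show c / y < 1
    rw [div_lt_one hy]; exact hcy
  have hlip : LipschitzWith k T := by
    rw [lipschitzWith_iff_dist_le_mul]
    intro φ ψ
    rw [Subtype.dist_eq, Subtype.dist_eq, dist_eq_norm, dist_eq_norm]
    exact hcontr φ.1 ψ.1 ((hmemK _).1 φ.2) ((hmemK _).1 ψ.2)
  have hCW : ContractingWith k T := ⟨hklt, hlip⟩
  refine ⟨Set.mem_Ico.2 ⟨hγ0, hγlt⟩, ?_⟩
  set φ0 := ContractingWith.fixedPoint T hCW with hφ0
  have hfix : T φ0 = φ0 := hCW.fixedPoint_isFixedPt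
  refine ⟨φ0.1, ⟨(hmemK _).1 φ0.2, (hfix_iff φ0.1).1 (congrArg Subtype.val hfix)⟩, ?_⟩
  rintro ψ ⟨hψs, hψeq⟩
  have hψfix : F ψ = ψ := (hfix_iff ψ).2 hψeq
  have hψK : ψ ∈ K := (hmemK _).2 hψs
  have : (⟨ψ, hψK⟩ : K) = φ0 := hCW.fixedPoint_unique (Subtype.ext hψfix)
  exact congrArg Subtype.val this
end

section
/- For every φ ∈ ℝ^m with ‖φ‖∞ < 1, the matrix P_cut + P_cyc·diag(1/√(1−φ_i²)) ∈ ℝ^{m×m} is invertible. (This matrix is the derivative at φ of the edge balance map F(φ) = P_cut φ + P_cyc arcsin(φ).) -/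
/-!
`P = P_cut` is idempotent and self-adjoint for the inner product weighted by `𝒜` (this uses that
`L†` is symmetric, as the pseudoinverse of the symmetric `L`). If
`(P + (1 - P) D) v = 0` with `D = diag(1/√(1-φᵢ²)) > 0`, multiplying by `P` gives `P v = 0`, hence
`P (D v) = D v`, and then `⟨𝒜 v, D v⟩ = ⟨𝒜 v, P (D v)⟩ = ⟨𝒜 P v, D v⟩ = 0`. As `𝒜 D` is a
positive diagonal matrix, `v = 0`.
-/

open Matrix

namespace Matrix

variable {ι R : Type*} [Fintype ι] [Semiring R] [StarRing R]

structure IsMoorePenroseInverse (L M : Matrix ι ι R) : Prop where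
  self_mul_inv_mul_self : L * M * L = L
  inv_mul_self_mul_inv : M * L * M = M
  isHermitian_inv_mul_self : (M * L).IsHermitian
  isHermitian_self_mul_inv : (L * M).IsHermitian

theorem IsMoorePenroseInverse.isHermitian {L M : Matrix ι ι R} (hM : IsMoorePenroseInverse L M)
    (hL : L.IsHermitian) : M.IsHermitian := by
  have h1 : M * L = L * Mᴴ := by rw [← hM.isHermitian_inv_mul_self.eq, conjTranspose_mul, hL.eq]
  have h2 : L * M = Mᴴ * L := by rw [← hM.isHermitian_self_mul_inv.eq, conjTranspose_mul, hL.eq]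
  have hS : M * Mᴴ * L = M := by
    rw [Matrix.mul_assoc, ← h2, ← Matrix.mul_assoc, hM.inv_mul_self_mul_inv]
  have key : M = M * L * Mᴴ :=
    calc M = M * Mᴴ * (L * M * L) := by rw [hM.self_mul_inv_mul_self, hS]
      _ = (M * Mᴴ * L) * (M * L) := by simp only [Matrix.mul_assoc]
      _ = M * L * Mᴴ := by rw [hS, Matrix.mul_assoc M L, ← h1]
  calc Mᴴ = M * Lᴴ * Mᴴ := by
        conv_lhs => rw [key]
        rw [conjTranspose_mul, conjTranspose_mul, conjTranspose_conjTranspose, Matrix.mul_assoc]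
    _ = M := by rw [hL.eq, ← key]

end Matrix

section CutProjection

variable {V E R : Type*} [Fintype V] [Fintype E] [DecidableEq E]

/-- `P_cut = Bᵀ L† B 𝒜`, with `M` in the role of `L†`. -/
def cutProjection [Semiring R] (B : Matrix V E R) (a : E → R) (M : Matrix V V R) :
    Matrix E E R :=
  Bᵀ * M * (B * diagonal a)

theorem cutProjection_isIdempotentElem [Semiring R] (B : Matrix V E R) (a : E → R)
    {M : Matrix V V R} (hM : M * (B * diagonal a * Bᵀ) * M = M) :
    IsIdempotentElem (cutProjection B a M) := by
  calc Bᵀ * M * (B * diagonal a) * (Bᵀ * M * (B * diagonal a))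
      = Bᵀ * (M * (B * diagonal a * Bᵀ) * M) * (B * diagonal a) := by
        simp only [Matrix.mul_assoc]
    _ = Bᵀ * M * (B * diagonal a) := by rw [hM, Matrix.mul_assoc]

theorem cutProjection_transpose_mul_diagonal [CommSemiring R] (B : Matrix V E R) (a : E → R)
    {M : Matrix V V R} (hM : Mᵀ = M) :
    (cutProjection B a M)ᵀ * diagonal a = diagonal a * cutProjection B a M := by
  simp only [cutProjection, transpose_mul, transpose_transpose, hM, diagonal_transpose,
    Matrix.mul_assoc]

end CutProjection

section Invertibility

variable {ι : Type*} [Fintype ι]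

theorem eq_zero_of_sum_mul_mul_eq_zero {a d v : ι → ℝ} (ha : ∀ i, 0 < a i)
    (hd : ∀ i, 0 < d i) (h : ∑ i, a i * v i * (d i * v i) = 0) : v = 0 := by
  have hnonneg : ∀ i ∈ Finset.univ, 0 ≤ a i * v i * (d i * v i) := fun i _ => by
    have := mul_pos (ha i) (hd i)
    nlinarith [sq_nonneg (v i)]
  funext i
  have hi := (Finset.sum_eq_zero_iff_of_nonneg hnonneg).mp h i (Finset.mem_univ i)
  have hsq : (a i * d i) * v i ^ 2 = 0 := by linear_combination hi
  simpa [(mul_pos (ha i) (hd i)).ne'] using hsq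

theorem isUnit_add_one_sub_mul_diagonal [DecidableEq ι] {P : Matrix ι ι ℝ}
    (hP : IsIdempotentElem P) {a d : ι → ℝ} (ha : ∀ i, 0 < a i) (hd : ∀ i, 0 < d i)
    (hPa : Pᵀ * diagonal a = diagonal a * P) :
    IsUnit (P + (1 - P) * diagonal d) := by
  set T := P + (1 - P) * diagonal d with hT
  refine mulVec_injective_iff_isUnit.mp ((injective_iff_map_eq_zero T.mulVecLin).mpr ?_)
  intro v hv
  change T *ᵥ v = 0 at hv
  have hPT : P * T = P := by
    rw [hT, Matrix.mul_add, ← Matrix.mul_assoc, Matrix.mul_sub, Matrix.mul_one, hP.eq, sub_self,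
      Matrix.zero_mul, add_zero]
  have hPv : P *ᵥ v = 0 := by rw [← hPT, ← mulVec_mulVec, hv, mulVec_zero]
  set w := diagonal d *ᵥ v
  have hPw : P *ᵥ w = w := by
    have hTv : T *ᵥ v = P *ᵥ v + (w - P *ᵥ w) := by
      rw [hT, add_mulVec, ← mulVec_mulVec, sub_mulVec, one_mulVec]
    rw [hv, hPv, zero_add, eq_comm, sub_eq_zero] at hTv
    exact hTv.symm
  have horth : (diagonal a *ᵥ v) ⬝ᵥ w = 0 :=
    calc (diagonal a *ᵥ v) ⬝ᵥ w = (diagonal a *ᵥ v) ⬝ᵥ (P *ᵥ w) := by rw [hPw]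
      _ = ((Pᵀ * diagonal a) *ᵥ v) ⬝ᵥ w := by
        rw [dotProduct_mulVec, ← mulVec_transpose, mulVec_mulVec]
      _ = 0 := by rw [hPa, ← mulVec_mulVec, hPv, mulVec_zero, zero_dotProduct]
  refine eq_zero_of_sum_mul_mul_eq_zero ha hd ?_
  simpa only [dotProduct, w, mulVec_diagonal] using horth

theorem one_div_sqrt_one_sub_sq_pos {φ : ι → ℝ} (hφ : ‖φ‖ < 1) (i : ι) :
    0 < 1 / Real.sqrt (1 - φ i ^ 2) := by
  have : φ i ^ 2 < 1 := sq_lt_one_iff_abs_lt_one _ |>.mpr ((norm_le_pi_norm φ i).trans_lt hφ)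
  have : 0 < 1 - φ i ^ 2 := by linarith
  positivity

end Invertibility

theorem edge_balance_map_derivative_invertible_general
    {n m : ℕ}
    (B : Matrix (Fin n) (Fin m) ℝ)
    (a : Fin m → ℝ) (ha : ∀ e, 0 < a e)
    (M : Matrix (Fin n) (Fin n) ℝ)
    (hM1 : (B * Matrix.diagonal a * B.transpose) * M * (B * Matrix.diagonal a * B.transpose)
        = B * Matrix.diagonal a * B.transpose)
    (hM2 : M * (B * Matrix.diagonal a * B.transpose) * M = M)
    (hM3 : (M * (B * Matrix.diagonal a * B.transpose))ᵀ = M * (B * Matrix.diagonal a * B.transpose))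
    (hM4 : ((B * Matrix.diagonal a * B.transpose) * M)ᵀ = (B * Matrix.diagonal a * B.transpose) * M)
    (φ : Fin m → ℝ) (hφ : ‖φ‖ < 1) :
    let Pcut : Matrix (Fin m) (Fin m) ℝ := B.transpose * M * (B * Matrix.diagonal a)
    let Pcyc : Matrix (Fin m) (Fin m) ℝ := 1 - Pcut
    IsUnit (Pcut + Pcyc * Matrix.diagonal (fun i => 1 / Real.sqrt (1 - φ i ^ 2))) := by
  have hL : (B * diagonal a * Bᵀ).IsHermitian :=
    isHermitian_mul_mul_conjTranspose B (isHermitian_diagonal a)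
  have hMsymm : Mᵀ = M :=
    (isHermitian_iff_isSymm.mp (IsMoorePenroseInverse.isHermitian ⟨hM1, hM2, hM3, hM4⟩ hL)).eq
  exact isUnit_add_one_sub_mul_diagonal (cutProjection_isIdempotentElem B a hM2) ha
    (one_div_sqrt_one_sub_sq_pos hφ) (cutProjection_transpose_mul_diagonal B a hMsymm)

/-- For every `φ ∈ ℝ^m` with `‖φ‖∞ < 1`, the matrix
`P_cut + P_cyc · diag(1/√(1−φᵢ²))` (the derivative at `φ` of the edge balance map
`F(φ) = P_cut φ + P_cyc arcsin(φ)`) is invertible. -/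
theorem edge_balance_map_derivative_invertible
    {n m : ℕ} (hn : 2 ≤ n)
    (B : Matrix (Fin n) (Fin m) ℝ)
    (hB : ∀ e : Fin m, ∃ i j : Fin n, i ≠ j ∧ B i e = 1 ∧ B j e = -1 ∧
      ∀ k : Fin n, k ≠ i → k ≠ j → B k e = 0)
    (hconn : ∀ x : Fin n → ℝ, B.transpose.mulVec x = 0 ↔ ∃ c : ℝ, x = fun _ => c)
    (a : Fin m → ℝ) (ha : ∀ e, 0 < a e)
    (M : Matrix (Fin n) (Fin n) ℝ)
    (hM1 : (B * Matrix.diagonal a * B.transpose) * M * (B * Matrix.diagonal a * B.transpose)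
        = B * Matrix.diagonal a * B.transpose)
    (hM2 : M * (B * Matrix.diagonal a * B.transpose) * M = M)
    (hM3 : (M * (B * Matrix.diagonal a * B.transpose))ᵀ = M * (B * Matrix.diagonal a * B.transpose))
    (hM4 : ((B * Matrix.diagonal a * B.transpose) * M)ᵀ = (B * Matrix.diagonal a * B.transpose) * M)
    (φ : Fin m → ℝ) (hφ : ‖φ‖ < 1) :
    let Pcut : Matrix (Fin m) (Fin m) ℝ := B.transpose * M * (B * Matrix.diagonal a)
    let Pcyc : Matrix (Fin m) (Fin m) ℝ := 1 - Pcut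
    IsUnit (Pcut + Pcyc * Matrix.diagonal (fun i => 1 / Real.sqrt (1 - φ i ^ 2))) :=
  edge_balance_map_derivative_invertible_general B a ha M hM1 hM2 hM3 hM4 φ hφ
end

section
/- Suppose in addition that the graph G is acyclic, i.e. m = n−1 and the columns of B are linearly independent (equivalently Im(Bᵀ) = ℝ^m, equivalently P_cyc = 0). Let ω ∈ ℝⁿ with 1_nᵀω = 0 and γ ∈ [0, π/2). Then there exists x ∈ ℝⁿ with 1_nᵀx = 0 and ‖Bᵀx‖∞ ≤ γ satisfying ω = B𝒜 sin(Bᵀx) if and only if ‖BᵀL†ω‖∞ ≤ sin(γ); moreover, in that case x* = L†B𝒜·arcsin(BᵀL†ω) is such a solution and Bᵀx* = arcsin(BᵀL†ω), so that sin(Bᵀx*) = BᵀL†ω. -/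
/-!
Write `L = B𝒜Bᵀ` and `M = L†`. Since `𝒜` is positive, `vᵀLv = ∑ₑ 𝒜ₑ (Bᵀv)ₑ²` shows that
`Ker L = Ker Bᵀ`, so `LML = L` gives `BᵀMLy = Bᵀy`: the cut projection `BᵀMB𝒜` fixes `Im Bᵀ`,
which for an acyclic graph is all of `ℝ^m`. Hence `ω = B𝒜 sin(Bᵀx)` forces `BᵀMω = sin(Bᵀx)`, and
conversely `x* = MB𝒜 arcsin(BᵀMω)` has `Bᵀx* = arcsin(BᵀMω)`; it sums to zero since it lies in the
range of the symmetric matrix `ML`, which annihilates `1ₙ`. The remaining equation `B𝒜BᵀMω = ω`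
holds because `LM` is the orthogonal projection onto `Im L = (Ker L)^⊥ ∋ ω`. On `[-π/2, π/2]`,
`sin` and `arcsin` are monotone, which turns `‖Bᵀx‖∞ ≤ γ` into `‖BᵀMω‖∞ ≤ sin γ` and back.
-/

open Matrix

section Trigonometry

open Real

lemma norm_sin_comp_le_s18 {κ : Type*} [Fintype κ] {v : κ → ℝ} {γ : ℝ} (hγ : γ ≤ π / 2)
    (hv : ‖v‖ ≤ γ) : ‖fun e => sin (v e)‖ ≤ sin γ := by
  have hγ0 : 0 ≤ γ := (norm_nonneg v).trans hv
  refine (pi_norm_le_iff_of_nonneg (sin_nonneg_of_nonneg_of_le_pi hγ0 (by linarith [pi_pos]))).2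
    fun e => ?_
  obtain ⟨hlo, hhi⟩ := abs_le.1 ((norm_le_pi_norm v e).trans hv)
  rw [Real.norm_eq_abs, abs_le]
  constructor
  · rw [← sin_neg]
    exact sin_le_sin_of_le_of_le_pi_div_two (by linarith) (by linarith) hlo
  · exact sin_le_sin_of_le_of_le_pi_div_two (by linarith) hγ hhi

lemma norm_arcsin_comp_le_s18 {κ : Type*} [Fintype κ] {η : κ → ℝ} {γ : ℝ} (hγ0 : 0 ≤ γ)
    (hγ : γ ≤ π / 2) (hη : ‖η‖ ≤ sin γ) : ‖fun e => arcsin (η e)‖ ≤ γ := by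
  refine (pi_norm_le_iff_of_nonneg hγ0).2 fun e => ?_
  obtain ⟨hlo, hhi⟩ := abs_le.1 ((norm_le_pi_norm η e).trans hη)
  rw [Real.norm_eq_abs, abs_le]
  constructor
  · rw [← arcsin_sin (by linarith) (by linarith : -γ ≤ π / 2), sin_neg]
    exact monotone_arcsin hlo
  · rw [← arcsin_sin (by linarith) hγ]
    exact monotone_arcsin hhi

lemma sin_comp_arcsin_of_norm_le_one_s18 {κ : Type*} [Fintype κ] {η : κ → ℝ} (hη : ‖η‖ ≤ 1) :
    (fun e => sin (arcsin (η e))) = η := by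
  funext e
  obtain ⟨hlo, hhi⟩ := abs_le.1 ((norm_le_pi_norm η e).trans hη)
  exact sin_arcsin hlo hhi

end Trigonometry

section Projection

variable {ι : Type*} [Fintype ι]

lemma sum_mulVec_eq_zero_of_transpose_mulVec_one {A : Matrix ι ι ℝ} (hA : Aᵀ *ᵥ 1 = 0)
    (y : ι → ℝ) : ∑ i, (A *ᵥ y) i = 0 := by
  rw [← one_dotProduct, dotProduct_mulVec, ← mulVec_transpose, hA, zero_dotProduct]

lemma mulVec_mulVec_eq_self_of_forall_dotProduct {L M : Matrix ι ι ℝ} (hL : Lᵀ = L)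
    (hLML : L * M * L = L) (hLM : (L * M)ᵀ = L * M) {ω : ι → ℝ}
    (hω : ∀ v, L *ᵥ v = 0 → ω ⬝ᵥ v = 0) : L *ᵥ (M *ᵥ ω) = ω := by
  have hLLM : L * (L * M) = L := by
    simpa only [transpose_mul, hLM, hL] using congrArg transpose hLML
  have hr : L *ᵥ (ω - L *ᵥ (M *ᵥ ω)) = 0 := by
    rw [mulVec_sub, mulVec_mulVec, mulVec_mulVec, Matrix.mul_assoc, hLLM, sub_self]
  have hLr : (L *ᵥ (M *ᵥ ω)) ⬝ᵥ (ω - L *ᵥ (M *ᵥ ω)) = 0 := by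
    rw [dotProduct_comm, dotProduct_mulVec, ← mulVec_transpose, hL, hr, zero_dotProduct]
  have hrr : (ω - L *ᵥ (M *ᵥ ω)) ⬝ᵥ (ω - L *ᵥ (M *ᵥ ω)) = 0 := by
    rw [sub_dotProduct ω _ (ω - _), hω _ hr, hLr, sub_zero]
  exact (sub_eq_zero.1 (dotProduct_self_eq_zero.1 hrr)).symm

end Projection

lemma transpose_mul_diagonal_mul_transpose {ι κ : Type*} [Fintype κ] [DecidableEq κ]
    (B : Matrix ι κ ℝ) (a : κ → ℝ) : (B * diagonal a * Bᵀ)ᵀ = B * diagonal a * Bᵀ := by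
  rw [transpose_mul, transpose_mul, transpose_transpose, diagonal_transpose, Matrix.mul_assoc]

section WeightedLaplacian

variable {ι κ : Type*} [Fintype ι] [Fintype κ] [DecidableEq κ] {B : Matrix ι κ ℝ} {a : κ → ℝ}

lemma dotProduct_mul_diagonal_mul_transpose_mulVec (v : ι → ℝ) :
    v ⬝ᵥ (B * diagonal a * Bᵀ) *ᵥ v = ∑ e, a e * (Bᵀ *ᵥ v) e ^ 2 := by
  rw [← mulVec_mulVec, ← mulVec_mulVec, dotProduct_mulVec, ← mulVec_transpose]
  simp only [dotProduct, mulVec_diagonal]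
  exact Finset.sum_congr rfl fun e _ => by ring

lemma transpose_mulVec_eq_zero_of_mul_diagonal_mul_transpose_mulVec_eq_zero
    (ha : ∀ e, 0 < a e) {v : ι → ℝ} (hv : (B * diagonal a * Bᵀ) *ᵥ v = 0) : Bᵀ *ᵥ v = 0 := by
  have hsum : ∑ e, a e * (Bᵀ *ᵥ v) e ^ 2 = 0 := by
    rw [← dotProduct_mul_diagonal_mul_transpose_mulVec, hv, dotProduct_zero]
  funext e
  have hterm := (Finset.sum_eq_zero_iff_of_nonneg fun e _ =>
    mul_nonneg (ha e).le (sq_nonneg ((Bᵀ *ᵥ v) e))).1 hsum e (Finset.mem_univ e)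
  exact pow_eq_zero_iff two_ne_zero |>.1 ((mul_eq_zero.1 hterm).resolve_left (ha e).ne')

/-- The cut projection `P_cut = BᵀMB𝒜` fixes `Im Bᵀ`. -/
lemma transpose_mulVec_mulVec_mul_diagonal_mulVec_transpose_mulVec (ha : ∀ e, 0 < a e)
    {M : Matrix ι ι ℝ} (hM : B * diagonal a * Bᵀ * M * (B * diagonal a * Bᵀ) = B * diagonal a * Bᵀ)
    (y : ι → ℝ) : Bᵀ *ᵥ (M *ᵥ ((B * diagonal a) *ᵥ (Bᵀ *ᵥ y))) = Bᵀ *ᵥ y := by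
  have hker : (B * diagonal a * Bᵀ) *ᵥ (M *ᵥ ((B * diagonal a * Bᵀ) *ᵥ y) - y) = 0 := by
    rw [mulVec_sub, mulVec_mulVec, mulVec_mulVec, hM, sub_self]
  rw [mulVec_mulVec y, ← sub_eq_zero, ← mulVec_sub]
  exact transpose_mulVec_eq_zero_of_mul_diagonal_mul_transpose_mulVec_eq_zero ha hker

lemma sum_mulVec_mulVec_mul_diagonal_mulVec_transpose_mulVec (hB : Bᵀ *ᵥ 1 = 0)
    {M : Matrix ι ι ℝ} (hM : (M * (B * diagonal a * Bᵀ))ᵀ = M * (B * diagonal a * Bᵀ))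
    (y : ι → ℝ) : ∑ i, (M *ᵥ ((B * diagonal a) *ᵥ (Bᵀ *ᵥ y))) i = 0 := by
  rw [mulVec_mulVec y, mulVec_mulVec]
  refine sum_mulVec_eq_zero_of_transpose_mulVec_one ?_ y
  rw [hM, ← mulVec_mulVec, ← mulVec_mulVec, hB, mulVec_zero, mulVec_zero]

end WeightedLaplacian

theorem acyclic_sync_characterization_general
    {n m : ℕ}
    (B : Matrix (Fin n) (Fin m) ℝ)
    (hconn : ∀ x : Fin n → ℝ, B.transpose.mulVec x = 0 ↔ ∃ c : ℝ, x = fun _ => c)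
    -- acyclicity: every edge vector is a flow vector, i.e. `Im(Bᵀ) = ℝ^m`
    (hacyclic : ∀ v : Fin m → ℝ, ∃ x : Fin n → ℝ, v = B.transpose.mulVec x)
    (a : Fin m → ℝ) (ha : ∀ e, 0 < a e)
    (M : Matrix (Fin n) (Fin n) ℝ)
    (hM1 : (B * Matrix.diagonal a * B.transpose) * M * (B * Matrix.diagonal a * B.transpose)
        = B * Matrix.diagonal a * B.transpose)
    (hM3 : (M * (B * Matrix.diagonal a * B.transpose))ᵀ = M * (B * Matrix.diagonal a * B.transpose))
    (hM4 : ((B * Matrix.diagonal a * B.transpose) * M)ᵀ = (B * Matrix.diagonal a * B.transpose) * M)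
    (ω : Fin n → ℝ) (hω : ∑ i, ω i = 0)
    (γ : ℝ) (hγ : γ ∈ Set.Ico 0 (Real.pi / 2)) :
    let η : Fin m → ℝ := B.transpose.mulVec (M.mulVec ω)
    ((∃ x : Fin n → ℝ, (∑ i, x i = 0) ∧ ‖B.transpose.mulVec x‖ ≤ γ ∧
        ω = (B * Matrix.diagonal a).mulVec (fun e => Real.sin (B.transpose.mulVec x e)))
      ↔ ‖η‖ ≤ Real.sin γ) ∧
    (‖η‖ ≤ Real.sin γ →
      ∀ xstar : Fin n → ℝ,
        xstar = M.mulVec ((B * Matrix.diagonal a).mulVec (fun e => Real.arcsin (η e))) →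
        (∑ i, xstar i = 0) ∧
        B.transpose.mulVec xstar = (fun e => Real.arcsin (η e)) ∧
        (fun e => Real.sin (B.transpose.mulVec xstar e)) = η ∧
        ‖B.transpose.mulVec xstar‖ ≤ γ ∧
        ω = (B * Matrix.diagonal a).mulVec (fun e => Real.sin (B.transpose.mulVec xstar e))) := by
  intro η
  obtain ⟨hγ0, hγ⟩ := hγ
  have hcut (f : Fin m → ℝ) : Bᵀ *ᵥ (M *ᵥ ((B * diagonal a) *ᵥ f)) = f := by
    obtain ⟨y, rfl⟩ := hacyclic f
    exact transpose_mulVec_mulVec_mul_diagonal_mulVec_transpose_mulVec ha hM1 y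
  have hLMω : (B * diagonal a) *ᵥ η = ω := by
    rw [mulVec_mulVec]
    refine mulVec_mulVec_eq_self_of_forall_dotProduct
      (transpose_mul_diagonal_mul_transpose B a) hM1 hM4 fun v hv => ?_
    obtain ⟨c, rfl⟩ := (hconn v).1
      (transpose_mulVec_eq_zero_of_mul_diagonal_mul_transpose_mulVec_eq_zero ha hv)
    simp [dotProduct, ← Finset.sum_mul, hω]
  refine (fun hsolution => ⟨⟨fun ⟨x, _, hx, hωx⟩ => ?necessary, fun hη => ?sufficient⟩,
    hsolution⟩) ?solution
  case solution =>
    rintro hη xstar rfl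
    have hsin := sin_comp_arcsin_of_norm_le_one_s18 (hη.trans (Real.sin_le_one γ))
    refine ⟨?_, hcut _, by rwa [hcut], by rw [hcut]; exact norm_arcsin_comp_le_s18 hγ0 hγ.le hη,
      by rw [hcut, hsin, hLMω]⟩
    obtain ⟨y, hy⟩ := hacyclic fun e => Real.arcsin (η e)
    rw [hy]
    exact sum_mulVec_mulVec_mul_diagonal_mulVec_transpose_mulVec ((hconn 1).2 ⟨1, rfl⟩) hM3 y
  case necessary =>
    subst hωx
    rw [show η = _ from hcut _]
    exact norm_sin_comp_le_s18 hγ.le hx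
  case sufficient =>
    obtain ⟨hsum, -, -, hnorm, hsol⟩ := hsolution hη _ rfl
    exact ⟨_, hsum, hnorm, hsol⟩

/-- Suppose the connected graph `G` is acyclic (equivalently
`Im(Bᵀ) = ℝ^m`). Let `ω ⊥ 1ₙ` and `γ ∈ [0, π/2)`. Then there exists `x ⊥ 1ₙ` with
`‖Bᵀx‖∞ ≤ γ` and `ω = B𝒜 sin(Bᵀx)` iff `‖BᵀL†ω‖∞ ≤ sin γ`; moreover, in that case
`x* = L†B𝒜·arcsin(BᵀL†ω)` is such a solution with `Bᵀx* = arcsin(BᵀL†ω)`, so that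
`sin(Bᵀx*) = BᵀL†ω`. -/
theorem acyclic_sync_characterization
    {n m : ℕ} (hn : 2 ≤ n)
    (B : Matrix (Fin n) (Fin m) ℝ)
    (hB : ∀ e : Fin m, ∃ i j : Fin n, i ≠ j ∧ B i e = 1 ∧ B j e = -1 ∧
      ∀ k : Fin n, k ≠ i → k ≠ j → B k e = 0)
    (hconn : ∀ x : Fin n → ℝ, B.transpose.mulVec x = 0 ↔ ∃ c : ℝ, x = fun _ => c)
    -- acyclicity: every edge vector is a flow vector, i.e. `Im(Bᵀ) = ℝ^m`
    (hacyclic : ∀ v : Fin m → ℝ, ∃ x : Fin n → ℝ, v = B.transpose.mulVec x)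
    (a : Fin m → ℝ) (ha : ∀ e, 0 < a e)
    (M : Matrix (Fin n) (Fin n) ℝ)
    (hM1 : (B * Matrix.diagonal a * B.transpose) * M * (B * Matrix.diagonal a * B.transpose)
        = B * Matrix.diagonal a * B.transpose)
    (hM2 : M * (B * Matrix.diagonal a * B.transpose) * M = M)
    (hM3 : (M * (B * Matrix.diagonal a * B.transpose))ᵀ = M * (B * Matrix.diagonal a * B.transpose))
    (hM4 : ((B * Matrix.diagonal a * B.transpose) * M)ᵀ = (B * Matrix.diagonal a * B.transpose) * M)
    (ω : Fin n → ℝ) (hω : ∑ i, ω i = 0)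
    (γ : ℝ) (hγ : γ ∈ Set.Ico 0 (Real.pi / 2)) :
    let η : Fin m → ℝ := B.transpose.mulVec (M.mulVec ω)
    ((∃ x : Fin n → ℝ, (∑ i, x i = 0) ∧ ‖B.transpose.mulVec x‖ ≤ γ ∧
        ω = (B * Matrix.diagonal a).mulVec (fun e => Real.sin (B.transpose.mulVec x e)))
      ↔ ‖η‖ ≤ Real.sin γ) ∧
    (‖η‖ ≤ Real.sin γ →
      ∀ xstar : Fin n → ℝ,
        xstar = M.mulVec ((B * Matrix.diagonal a).mulVec (fun e => Real.arcsin (η e))) →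
        (∑ i, xstar i = 0) ∧
        B.transpose.mulVec xstar = (fun e => Real.arcsin (η e)) ∧
        (fun e => Real.sin (B.transpose.mulVec xstar e)) = η ∧
        ‖B.transpose.mulVec xstar‖ ≤ γ ∧
        ω = (B * Matrix.diagonal a).mulVec (fun e => Real.sin (B.transpose.mulVec xstar e))) :=
  acyclic_sync_characterization_general B hconn hacyclic a ha M hM1 hM3 hM4 ω hω γ hγ
end
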